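/- arXiv:1904.03938 — 9 statements merged into one kernel-verified Lean document; each statement's English description precedes it below -/
import Mathlib

section
/- There exists T₃ > T₀ such that F₁'(t) > 0 and F₂'(t) > 0 for all t ≥ T₃. -/
/-!
Both functions tend to infinity, so neither can be nonincreasing on a half-line: each has a point
where its derivative is positive. From there on the derivative stays positive, because
`F₂'' > 0` makes `F₂'` increasing and `F₁'' + F₁' > 0` makes `eᵗ F₁'` increasing.
-/

open Real Set Filter

lemma tendsto_atTop_of_rpow_le {F : ℝ → ℝ} {k α R T : ℝ} (hk : 0 < k) (hα : 0 < α)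
    (hF : ∀ t, T ≤ t → k * (t + R) ^ α ≤ F t) : Tendsto F atTop atTop := by
  have hpow : Tendsto (fun t : ℝ => k * (t + R) ^ α) atTop atTop :=
    ((tendsto_rpow_atTop hα).comp
      (tendsto_atTop_add_const_right atTop R tendsto_id)).const_mul_atTop hk
  exact tendsto_atTop_mono' atTop ((eventually_ge_atTop T).mono hF) hpow

lemma exists_deriv_pos_of_tendsto_atTop {f : ℝ → ℝ} {a : ℝ}
    (hf : DifferentiableOn ℝ f (Ioi a)) (htop : Tendsto f atTop atTop) :
    ∃ t > a, 0 < deriv f t := by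
  by_contra! hle
  have hanti : AntitoneOn f (Ioi a) :=
    antitoneOn_of_deriv_nonpos (convex_Ioi a) hf.continuousOn
      (by rwa [interior_Ioi]) (by rwa [interior_Ioi])
  obtain ⟨t, hft, hta⟩ :=
    ((htop.eventually_gt_atTop (f (a + 1))).and (eventually_ge_atTop (a + 1))).exists
  exact (hft.trans_le (hanti (by simp) (by simp; linarith) hta)).false

/-- The weight `exp (c t)` turns `f'' + c f' > 0` into the monotonicity of `exp (c t) f'`. -/
lemma eventually_deriv_pos_of_deriv_deriv_add_pos {f : ℝ → ℝ} {a c : ℝ}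
    (hf : ContDiffOn ℝ 2 f (Ioi a))
    (hpos : ∀ t ∈ Ioi a, 0 < deriv (deriv f) t + c * deriv f t)
    (htop : Tendsto f atTop atTop) : ∀ᶠ t in atTop, 0 < deriv f t := by
  have hf' : DifferentiableOn ℝ (deriv f) (Ioi a) :=
    (hf.deriv_of_isOpen isOpen_Ioi (by norm_num)).differentiableOn one_ne_zero
  set g : ℝ → ℝ := fun t => exp (c * t) * deriv f t
  have hg : ∀ t ∈ Ioi a,
      HasDerivAt g (exp (c * t) * (deriv (deriv f) t + c * deriv f t)) t := by
    intro t ht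
    have hexp : HasDerivAt (fun t => exp (c * t)) (exp (c * t) * c) t := by
      simpa using ((hasDerivAt_id t).const_mul c).exp
    exact (hexp.mul (hf'.differentiableAt (isOpen_Ioi.mem_nhds ht)).hasDerivAt).congr_deriv
      (by ring)
  have hg_mono : StrictMonoOn g (Ioi a) := by
    refine strictMonoOn_of_deriv_pos (convex_Ioi a)
      (fun t ht => (hg t ht).continuousAt.continuousWithinAt) fun t ht => ?_
    rw [interior_Ioi] at ht
    rw [(hg t ht).deriv]
    exact mul_pos (exp_pos _) (hpos t ht)
  obtain ⟨t₀, ht₀, hft₀⟩ :=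
    exists_deriv_pos_of_tendsto_atTop (hf.differentiableOn (by norm_num)) htop
  filter_upwards [eventually_ge_atTop t₀] with t ht
  have hgt : 0 < g t :=
    (mul_pos (exp_pos _) hft₀).trans_le (hg_mono.monotoneOn ht₀ (ht₀.trans_le ht) ht)
  exact (mul_pos_iff_of_pos_left (exp_pos _)).mp hgt

theorem stmt_0_general
    (p q α₁ α₂ β₁ β₂ β₃ k₀ k₂ k₃ k₄ R T₀ : ℝ)
    (hα₁ : 0 < α₁) (hβ₁ : 0 < β₁)
    (hk₀ : 0 < k₀) (hk₂ : 0 < k₂) (hk₃ : 0 < k₃) (hk₄ : 0 < k₄)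
    (F₁ F₂ : ℝ → ℝ)
    (hF₁ : ContDiffOn ℝ 2 F₁ (Ici T₀)) (hF₂ : ContDiffOn ℝ 2 F₂ (Ici T₀))
    (h1 : ∀ t, T₀ ≤ t → k₀ * (t + R) ^ α₁ ≤ F₁ t)
    (h2 : ∀ t, T₀ ≤ t →
      k₂ * (t + R) ^ (-α₂) * (F₂ t) ^ p ≤ deriv (deriv F₁) t + deriv F₁ t)
    (h3 : ∀ t, T₀ ≤ t → k₃ * (t + R) ^ β₁ ≤ F₂ t)
    (h4 : ∀ t, T₀ ≤ t →
      k₄ * Real.exp (-β₃ * t) * (t + R) ^ (-β₂) * (F₁ t) ^ q ≤ deriv (deriv F₂) t) :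
    ∃ T₃, T₀ < T₃ ∧ ∀ t, T₃ ≤ t → 0 < deriv F₁ t ∧ 0 < deriv F₂ t := by
  have hlarge : ∀ t ∈ Ioi (max T₀ (-R)), T₀ ≤ t ∧ 0 < t + R := fun t ht => by
    simp only [mem_Ioi, max_lt_iff] at ht
    constructor <;> linarith
  have hF₁_pos : ∀ t ∈ Ioi (max T₀ (-R)), 0 < F₁ t := fun t ht => by
    obtain ⟨hT₀t, hRt⟩ := hlarge t ht
    exact lt_of_lt_of_le (by positivity) (h1 t hT₀t)
  have hF₂_pos : ∀ t ∈ Ioi (max T₀ (-R)), 0 < F₂ t := fun t ht => by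
    obtain ⟨hT₀t, hRt⟩ := hlarge t ht
    exact lt_of_lt_of_le (by positivity) (h3 t hT₀t)
  have hF₁' : ∀ᶠ t in atTop, 0 < deriv F₁ t := by
    refine eventually_deriv_pos_of_deriv_deriv_add_pos (c := 1)
      (hF₁.mono fun t ht => (hlarge t ht).1) (fun t ht => ?_)
      (tendsto_atTop_of_rpow_le hk₀ hα₁ h1)
    obtain ⟨hT₀t, hRt⟩ := hlarge t ht
    have := hF₂_pos t ht
    rw [one_mul]
    exact lt_of_lt_of_le (by positivity) (h2 t hT₀t)
  have hF₂' : ∀ᶠ t in atTop, 0 < deriv F₂ t := by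
    refine eventually_deriv_pos_of_deriv_deriv_add_pos (c := 0)
      (hF₂.mono fun t ht => (hlarge t ht).1) (fun t ht => ?_)
      (tendsto_atTop_of_rpow_le hk₃ hβ₁ h3)
    obtain ⟨hT₀t, hRt⟩ := hlarge t ht
    have := hF₁_pos t ht
    rw [zero_mul, add_zero]
    exact lt_of_lt_of_le (by positivity) (h4 t hT₀t)
  obtain ⟨T, hT⟩ := eventually_atTop.mp (hF₁'.and hF₂')
  exact ⟨max T (T₀ + 1), by simp, fun t ht => hT t (le_of_max_le_left ht)⟩

/-- There exists `T₃ > T₀` such that `F₁'(t) > 0` and `F₂'(t) > 0` for all `t ≥ T₃`. -/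
theorem stmt_0
    (p q α₁ α₂ β₁ β₂ β₃ k₀ k₂ k₃ k₄ R T₀ : ℝ)
    (hp : 1 < p) (hq : 1 < q)
    (hα₂ : 0 ≤ α₂) (hβ₂ : 0 ≤ β₂) (hβ₃ : 0 ≤ β₃)
    (hα₁ : 0 < α₁) (hβ₁ : 0 < β₁)
    (hk₀ : 0 < k₀) (hk₂ : 0 < k₂) (hk₃ : 0 < k₃) (hk₄ : 0 < k₄)
    (hR : 0 < R) (hT₀ : 0 < T₀)
    (F₁ F₂ : ℝ → ℝ)
    (hF₁ : ContDiffOn ℝ 2 F₁ (Ici T₀)) (hF₂ : ContDiffOn ℝ 2 F₂ (Ici T₀))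
    (h1 : ∀ t, T₀ ≤ t → k₀ * (t + R) ^ α₁ ≤ F₁ t)
    (h2 : ∀ t, T₀ ≤ t →
      k₂ * (t + R) ^ (-α₂) * (F₂ t) ^ p ≤ deriv (deriv F₁) t + deriv F₁ t)
    (h3 : ∀ t, T₀ ≤ t → k₃ * (t + R) ^ β₁ ≤ F₂ t)
    (h4 : ∀ t, T₀ ≤ t →
      k₄ * Real.exp (-β₃ * t) * (t + R) ^ (-β₂) * (F₁ t) ^ q ≤ deriv (deriv F₂) t) :
    ∃ T₃, T₀ < T₃ ∧ ∀ t, T₃ ≤ t → 0 < deriv F₁ t ∧ 0 < deriv F₂ t :=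
  stmt_0_general p q α₁ α₂ β₁ β₂ β₃ k₀ k₂ k₃ k₄ R T₀ hα₁ hβ₁ hk₀ hk₂ hk₃ hk₄ F₁ F₂ hF₁ hF₂ h1 h2 h3
    h4
end

section
/- There exists T₄ ≥ T₃ such that for all t ≥ T₄ one has (F₁'(t) + F₁(t)) · F₂'(t) ≥ (k₂/(2(p+1))) (t+R)^{-α₂} F₂(t)^{p+1}. -/
open Real Set Filter

/-!
Let `H = (F₁' + F₁) F₂' - k₂/(p+1) (t+R)^(-α₂) F₂^(p+1)`. In `H'` the derivative of `F₂^(p+1)`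
contributes `-k₂ (t+R)^(-α₂) F₂^p F₂'`, which the term `(F₁'' + F₁') F₂'` absorbs; what remains is
nonnegative because `α₂ ≥ 0` and `F₂'' ≥ 0`. So `H` is nondecreasing. Since `F₂'' > 0`, `F₂'` is
eventually at least some `c > 0`, hence `(F₁' + F₁) F₂' ≥ k₀ c (t+R)^α₁ → ∞`. Eventually
`(F₁' + F₁) F₂'` is thus at least both `k₂/(p+1) (t+R)^(-α₂) F₂^(p+1) + H(T₀)` and `-H(T₀)`, and
the average of these two bounds is the claim.
-/

noncomputable def energy (F₁ F₂ : ℝ → ℝ) (k p α R t : ℝ) : ℝ :=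
  (deriv F₁ t + F₁ t) * deriv F₂ t - k / (p + 1) * (t + R) ^ (-α) * F₂ t ^ (p + 1)

lemma ContDiffOn.differentiableAt_deriv_of_isOpen {f : ℝ → ℝ} {s : Set ℝ} {x : ℝ}
    (hf : ContDiffOn ℝ 2 f s) (hs : IsOpen s) (hx : x ∈ s) : DifferentiableAt ℝ (deriv f) x :=
  ((hf.deriv_of_isOpen hs (by norm_num)).differentiableOn one_ne_zero).differentiableAt
    (hs.mem_nhds hx)

lemma hasDerivAt_weighted_rpow {f : ℝ → ℝ} {f' k p α R t : ℝ} (hf : HasDerivAt f f' t)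
    (ht : 0 < t + R) (hft : 0 < f t) (hp : p + 1 ≠ 0) :
    HasDerivAt (fun s => k / (p + 1) * (s + R) ^ (-α) * f s ^ (p + 1))
      (k * (t + R) ^ (-α) * f t ^ p * f' - k / (p + 1) * α * (t + R) ^ (-α - 1) * f t ^ (p + 1))
      t := by
  have hweight := (((hasDerivAt_id t).add_const R).rpow_const (p := -α) (Or.inl ht.ne')).const_mul
    (k / (p + 1))
  refine (hweight.mul (hf.rpow_const (p := p + 1) (Or.inl hft.ne'))).congr_deriv ?_
  rw [add_sub_cancel_right, id]
  field_simp
  ring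

lemma hasDerivAt_energy {F₁ F₂ : ℝ → ℝ} {k p α R t : ℝ}
    (h₁ : DifferentiableAt ℝ F₁ t) (h₁' : DifferentiableAt ℝ (deriv F₁) t)
    (h₂ : DifferentiableAt ℝ F₂ t) (h₂' : DifferentiableAt ℝ (deriv F₂) t)
    (ht : 0 < t + R) (hF₂ : 0 < F₂ t) (hp : p + 1 ≠ 0) :
    HasDerivAt (energy F₁ F₂ k p α R)
      ((deriv (deriv F₁) t + deriv F₁ t) * deriv F₂ t
        + (deriv F₁ t + F₁ t) * deriv (deriv F₂) t
        - (k * (t + R) ^ (-α) * F₂ t ^ p * deriv F₂ t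
          - k / (p + 1) * α * (t + R) ^ (-α - 1) * F₂ t ^ (p + 1))) t :=
  ((h₁'.hasDerivAt.add h₁.hasDerivAt).mul h₂'.hasDerivAt).sub
    (hasDerivAt_weighted_rpow h₂.hasDerivAt ht hF₂ hp)

lemma monotoneOn_energy {F₁ F₂ : ℝ → ℝ} {k p α R a : ℝ} (hp : 0 < p + 1) (hk : 0 ≤ k)
    (hα : 0 ≤ α) (ha : -R ≤ a)
    (hF₁ : ContDiffOn ℝ 2 F₁ (Ioi a)) (hF₂ : ContDiffOn ℝ 2 F₂ (Ioi a))
    (hF₂pos : ∀ t ∈ Ioi a, 0 < F₂ t) (hsum : ∀ t ∈ Ioi a, 0 ≤ deriv F₁ t + F₁ t)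
    (hF₂' : ∀ t ∈ Ioi a, 0 ≤ deriv F₂ t) (hF₂'' : ∀ t ∈ Ioi a, 0 ≤ deriv (deriv F₂) t)
    (hineq : ∀ t ∈ Ioi a, k * (t + R) ^ (-α) * F₂ t ^ p ≤ deriv (deriv F₁) t + deriv F₁ t) :
    MonotoneOn (energy F₁ F₂ k p α R) (Ioi a) := by
  have hR : ∀ t ∈ Ioi a, 0 < t + R := fun t ht => by linarith [mem_Ioi.1 ht]
  have hderiv : ∀ t ∈ Ioi a, HasDerivAt (energy F₁ F₂ k p α R) _ t := fun t ht =>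
    hasDerivAt_energy ((hF₁.differentiableOn two_ne_zero).differentiableAt (isOpen_Ioi.mem_nhds ht))
      (hF₁.differentiableAt_deriv_of_isOpen isOpen_Ioi ht)
      ((hF₂.differentiableOn two_ne_zero).differentiableAt (isOpen_Ioi.mem_nhds ht))
      (hF₂.differentiableAt_deriv_of_isOpen isOpen_Ioi ht) (hR t ht) (hF₂pos t ht) hp.ne'
  refine monotoneOn_of_hasDerivWithinAt_nonneg (convex_Ioi a)
    (fun t ht => (hderiv t ht).continuousAt.continuousWithinAt)
    (fun t ht => (hderiv t (interior_subset ht)).hasDerivWithinAt) fun t ht => ?_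
  rw [interior_Ioi] at ht
  have hdominant := mul_le_mul_of_nonneg_right (hineq t ht) (hF₂' t ht)
  have hconvex := mul_nonneg (hsum t ht) (hF₂'' t ht)
  have hweight : 0 ≤ k / (p + 1) * α * (t + R) ^ (-α - 1) * F₂ t ^ (p + 1) := by
    have := hR t ht
    have := hF₂pos t ht
    positivity
  linarith

lemma exists_pos_eventually_le_of_deriv_pos {g : ℝ → ℝ} {a : ℝ} (hg : ContinuousOn g (Ioi a))
    (hg' : ∀ t ∈ Ioi a, 0 < deriv g t) (hg₀ : ∀ t ∈ Ioi a, 0 ≤ g t) :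
    ∃ c > 0, ∀ᶠ t in atTop, c ≤ g t := by
  have hmono : StrictMonoOn g (Ioi a) :=
    strictMonoOn_of_deriv_pos (convex_Ioi a) hg (by rwa [interior_Ioi])
  have hmid : a < a + 1 / 2 := by linarith
  have hone : a < a + 1 := by linarith
  refine ⟨g (a + 1), (hg₀ _ hmid).trans_lt (hmono hmid hone (by linarith)), ?_⟩
  filter_upwards [eventually_ge_atTop (a + 1)] with t ht
  exact hmono.monotoneOn hone (hone.trans_le ht) ht

lemma tendsto_mul_atTop_of_rpow_le {f g : ℝ → ℝ} {k c α R : ℝ} (hk : 0 < k) (hc : 0 < c)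
    (hα : 0 < α) (hf : ∀ᶠ t in atTop, k * (t + R) ^ α ≤ f t) (hg : ∀ᶠ t in atTop, c ≤ g t) :
    Tendsto (fun t => f t * g t) atTop atTop := by
  have hlow : Tendsto (fun t => k * (t + R) ^ α * c) atTop atTop :=
    (((tendsto_rpow_atTop hα).comp (tendsto_atTop_add_const_right _ R tendsto_id)).const_mul_atTop
      hk).atTop_mul_const hc
  refine tendsto_atTop_mono' _ ?_ hlow
  filter_upwards [hf, hg, eventually_gt_atTop (-R)] with t hft hgt ht
  have : 0 < t + R := by linarith
  exact mul_le_mul hft hgt hc.le ((by positivity : 0 ≤ k * (t + R) ^ α).trans hft)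

theorem stmt_1_general
    (p q α₁ α₂ β₁ β₂ β₃ k₀ k₂ k₃ k₄ R T₃ : ℝ)
    (hp : 1 < p)
    (hα₂ : 0 ≤ α₂)
    (hα₁ : 0 < α₁)
    (hk₀ : 0 < k₀) (hk₂ : 0 < k₂) (hk₃ : 0 < k₃) (hk₄ : 0 < k₄)
    (F₁ F₂ : ℝ → ℝ)
    (hF₁ : ContDiffOn ℝ 2 F₁ (Ici T₃)) (hF₂ : ContDiffOn ℝ 2 F₂ (Ici T₃))
    (h1 : ∀ t, T₃ ≤ t → k₀ * (t + R) ^ α₁ ≤ F₁ t)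
    (h1' : ∀ t, T₃ ≤ t → 0 ≤ deriv F₁ t)
    (h2 : ∀ t, T₃ ≤ t →
      k₂ * (t + R) ^ (-α₂) * (F₂ t) ^ p ≤ deriv (deriv F₁) t + deriv F₁ t)
    (h3 : ∀ t, T₃ ≤ t → k₃ * (t + R) ^ β₁ ≤ F₂ t)
    (h3' : ∀ t, T₃ ≤ t → 0 ≤ deriv F₂ t)
    (h4 : ∀ t, T₃ ≤ t →
      k₄ * Real.exp (-β₃ * t) * (t + R) ^ (-β₂) * (F₁ t) ^ q ≤ deriv (deriv F₂) t) :
    ∃ T₄, T₃ ≤ T₄ ∧ ∀ t, T₄ ≤ t →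
      k₂ / (2 * (p + 1)) * (t + R) ^ (-α₂) * (F₂ t) ^ (p + 1) ≤
        (deriv F₁ t + F₁ t) * deriv F₂ t := by
  set a := max T₃ (-R)
  have hT₃ : Ioi a ⊆ Ici T₃ := fun t ht => (le_max_left T₃ (-R)).trans ht.le
  have hR : ∀ t ∈ Ioi a, 0 < t + R := fun t ht => by linarith [(le_max_right T₃ (-R)).trans_lt ht]
  have hF₁pos : ∀ t ∈ Ioi a, 0 < F₁ t := fun t ht =>
    (mul_pos hk₀ (rpow_pos_of_pos (hR t ht) α₁)).trans_le (h1 t (hT₃ ht))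
  have hF₂pos : ∀ t ∈ Ioi a, 0 < F₂ t := fun t ht =>
    (mul_pos hk₃ (rpow_pos_of_pos (hR t ht) β₁)).trans_le (h3 t (hT₃ ht))
  have hF₂'' : ∀ t ∈ Ioi a, 0 < deriv (deriv F₂) t := fun t ht => by
    have := hR t ht
    have := hF₁pos t ht
    exact lt_of_lt_of_le (by positivity) (h4 t (hT₃ ht))
  obtain ⟨c, hc, hF₂'_ge⟩ := exists_pos_eventually_le_of_deriv_pos
    ((hF₂.mono hT₃).deriv_of_isOpen isOpen_Ioi (m := 1) (by norm_num)).continuousOn hF₂''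
    (fun t ht => h3' t (hT₃ ht))
  have hmono := monotoneOn_energy (by linarith) hk₂.le hα₂ (le_max_right _ _) (hF₁.mono hT₃)
    (hF₂.mono hT₃) hF₂pos (fun t ht => add_nonneg (h1' t (hT₃ ht)) (hF₁pos t ht).le)
    (fun t ht => h3' t (hT₃ ht)) (fun t ht => (hF₂'' t ht).le) (fun t ht => h2 t (hT₃ ht))
  have hgrow := tendsto_mul_atTop_of_rpow_le hk₀ hc hα₁ (f := fun t => deriv F₁ t + F₁ t)
    (eventually_atTop.2 ⟨T₃, fun t ht => le_add_of_nonneg_of_le (h1' t ht) (h1 t ht)⟩)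
    hF₂'_ge
  have ha : a + 1 ∈ Ioi a := by simp
  obtain ⟨N, hN⟩ := eventually_atTop.1 <|
    (hgrow.eventually_ge_atTop (-energy F₁ F₂ k₂ p α₂ R (a + 1))).and (eventually_ge_atTop (a + 1))
  refine ⟨max T₃ N, le_max_left _ _, fun t ht => ?_⟩
  obtain ⟨hlarge, hta⟩ := hN t ((le_max_right _ _).trans ht)
  have henergy := hmono ha (ha.trans_le hta) hta
  unfold energy at henergy hlarge
  have hhalf : k₂ / (2 * (p + 1)) = k₂ / (p + 1) / 2 := by rw [div_div, mul_comm]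
  rw [hhalf]
  linarith

/-- (F₁' + F₁)·F₂' lower bound for large times. -/
theorem stmt_1
    (p q α₁ α₂ β₁ β₂ β₃ k₀ k₂ k₃ k₄ R T₃ : ℝ)
    (hp : 1 < p) (hq : 1 < q)
    (hα₂ : 0 ≤ α₂) (hβ₂ : 0 ≤ β₂) (hβ₃ : 0 ≤ β₃)
    (hα₁ : 0 < α₁) (hβ₁ : 0 < β₁)
    (hk₀ : 0 < k₀) (hk₂ : 0 < k₂) (hk₃ : 0 < k₃) (hk₄ : 0 < k₄)
    (hR : 0 < R) (hT₃ : 0 < T₃)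
    (F₁ F₂ : ℝ → ℝ)
    (hF₁ : ContDiffOn ℝ 2 F₁ (Ici T₃)) (hF₂ : ContDiffOn ℝ 2 F₂ (Ici T₃))
    (h1 : ∀ t, T₃ ≤ t → k₀ * (t + R) ^ α₁ ≤ F₁ t)
    (h1' : ∀ t, T₃ ≤ t → 0 ≤ deriv F₁ t)
    (h2 : ∀ t, T₃ ≤ t →
      k₂ * (t + R) ^ (-α₂) * (F₂ t) ^ p ≤ deriv (deriv F₁) t + deriv F₁ t)
    (h3 : ∀ t, T₃ ≤ t → k₃ * (t + R) ^ β₁ ≤ F₂ t)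
    (h3' : ∀ t, T₃ ≤ t → 0 ≤ deriv F₂ t)
    (h4 : ∀ t, T₃ ≤ t →
      k₄ * Real.exp (-β₃ * t) * (t + R) ^ (-β₂) * (F₁ t) ^ q ≤ deriv (deriv F₂) t) :
    ∃ T₄, T₃ ≤ T₄ ∧ ∀ t, T₄ ≤ t →
      k₂ / (2 * (p + 1)) * (t + R) ^ (-α₂) * (F₂ t) ^ (p + 1) ≤
        (deriv F₁ t + F₁ t) * deriv F₂ t :=
  stmt_1_general p q α₁ α₂ β₁ β₂ β₃ k₀ k₂ k₃ k₄ R T₃ hp hα₂ hα₁ hk₀ hk₂ hk₃ hk₄ F₁ F₂ hF₁ hF₂ h1 h1'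
    h2 h3 h3' h4
end

section
/- There exists T₅ ≥ T₃ such that for all t ≥ T₅ one has e^t F₁(t) (F₂'(t))² ≥ (k₂/(4(p+1)(p+2))) (t+R)^{-α₂} F₂(t)^{p+2}. -/
open Real Set Filter

/-! Fix `a > T₃`, put `D = F₂ a` and `w t = (t + R) ^ (-α₂)`, a positive nonincreasing weight.
Since `(eᵗ F₁')' = eᵗ (F₁'' + F₁') ≥ k₂ w F₂ᵖ`, comparing derivatives from `a` on gives
`eᵗ F₁' F₂' ≥ k₂ / (p + 1) · w · (F₂ ^ (p + 1) - D ^ (p + 1))`. Multiplying by `F₂'` and comparing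
derivatives once more gives `eᵗ F₁ F₂'² ≥ k₂ / ((p + 1) (p + 2)) · w · G(F₂)` with
`G x = x ^ (p + 2) - (p + 2) D ^ (p + 1) x + (p + 1) D ^ (p + 2)`. By Young's inequality `G ≥ 0`,
which is what lets the decreasing weight pass through the comparisons, and `G x ≥ x ^ (p + 2) / 4`
for large `x`; finally `F₂ → ∞` because `F₂ ≥ k₃ (t + R) ^ β₁`. -/

lemma monotoneOn_Ici_of_hasDerivAt_nonneg {f f' : ℝ → ℝ} {a : ℝ}
    (hf : ∀ t ∈ Ici a, HasDerivAt f (f' t) t) (hf' : ∀ t ∈ Ici a, 0 ≤ f' t) :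
    MonotoneOn f (Ici a) :=
  monotoneOn_of_hasDerivWithinAt_nonneg (convex_Ici a)
    (fun t ht => (hf t ht).continuousAt.continuousWithinAt)
    (fun t ht => (hf t (interior_subset ht)).hasDerivWithinAt)
    (fun t ht => hf' t (interior_subset ht))

lemma ContDiffAt.hasDerivAt_deriv {𝕜 E : Type*} [NontriviallyNormedField 𝕜]
    [NormedAddCommGroup E] [NormedSpace 𝕜 E] {F : 𝕜 → E} {x : 𝕜} (hF : ContDiffAt 𝕜 2 F x) :
    HasDerivAt (deriv F) (deriv (deriv F) x) x :=
  ((hF.derivWithin (m := 1) (by norm_num)).differentiableAt one_ne_zero).hasDerivAt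

lemma hasDerivAt_add_const_rpow {R α t : ℝ} (h : 0 < t + R) :
    HasDerivAt (fun s => (s + R) ^ α) (α * (t + R) ^ (α - 1)) t := by
  simpa using ((hasDerivAt_id t).add_const R).rpow_const (p := α) (Or.inl h.ne')

lemma mul_comp_le_of_hasDerivAt {L L' w w' F F' G g : ℝ → ℝ} {a : ℝ}
    (hL : ∀ t ∈ Ici a, HasDerivAt L (L' t) t) (hw : ∀ t ∈ Ici a, HasDerivAt w (w' t) t)
    (hF : ∀ t ∈ Ici a, HasDerivAt F (F' t) t) (hG : ∀ t ∈ Ici a, HasDerivAt G (g (F t)) (F t))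
    (hw'G : ∀ t ∈ Ici a, w' t * G (F t) ≤ 0)
    (hgL : ∀ t ∈ Ici a, w t * g (F t) * F' t ≤ L' t)
    (ha : w a * G (F a) ≤ L a) :
    ∀ t ∈ Ici a, w t * G (F t) ≤ L t := by
  have hmono : MonotoneOn (fun t => L t - w t * G (F t)) (Ici a) :=
    monotoneOn_Ici_of_hasDerivAt_nonneg
      (fun t ht => (hL t ht).sub ((hw t ht).mul ((hG t ht).comp t (hF t ht))))
      (fun t ht => by linarith [hw'G t ht, hgL t ht])
  intro t ht
  linarith [hmono self_mem_Ici ht ht]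

lemma add_one_mul_rpow_mul_le {x D r : ℝ} (hx : 0 ≤ x) (hD : 0 ≤ D) (hr : 0 ≤ r) :
    (r + 1) * D ^ r * x ≤ x ^ (r + 1) + r * D ^ (r + 1) := by
  have hr1 : 0 < r + 1 := by linarith
  have h := geom_mean_le_arith_mean2_weighted (w₁ := 1 / (r + 1)) (w₂ := r / (r + 1))
    (p₁ := x ^ (r + 1)) (p₂ := D ^ (r + 1)) (by positivity) (by positivity) (by positivity)
    (by positivity) (by field_simp; ring)
  rw [← rpow_mul hx, ← rpow_mul hD, mul_one_div_cancel hr1.ne', rpow_one,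
    mul_div_cancel₀ r hr1.ne'] at h
  calc (r + 1) * D ^ r * x = (r + 1) * (x * D ^ r) := by ring
    _ ≤ (r + 1) * (1 / (r + 1) * x ^ (r + 1) + r / (r + 1) * D ^ (r + 1)) := by gcongr
    _ = x ^ (r + 1) + r * D ^ (r + 1) := by field_simp

lemma le_exp_mul_deriv_mul_deriv {F₁ F₂ : ℝ → ℝ} {a R p k₂ α₂ : ℝ}
    (ha : 0 ≤ a) (haR : 0 < a + R) (hp : 0 < p + 1) (hk₂ : 0 ≤ k₂) (hα₂ : 0 ≤ α₂)
    (hF₁ : ∀ t ∈ Ici a, ContDiffAt ℝ 2 F₁ t) (hF₂ : ∀ t ∈ Ici a, ContDiffAt ℝ 2 F₂ t)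
    (hF₂_pos : ∀ t ∈ Ici a, 0 < F₂ t) (hF₁'_nonneg : ∀ t ∈ Ici a, 0 ≤ deriv F₁ t)
    (hF₂'_nonneg : ∀ t ∈ Ici a, 0 ≤ deriv F₂ t)
    (hF₂''_nonneg : ∀ t ∈ Ici a, 0 ≤ deriv (deriv F₂) t)
    (hF₁'' : ∀ t ∈ Ici a,
      k₂ * (t + R) ^ (-α₂) * F₂ t ^ p ≤ deriv (deriv F₁) t + deriv F₁ t) :
    ∀ t ∈ Ici a, (t + R) ^ (-α₂) * (k₂ / (p + 1) * (F₂ t ^ (p + 1) - F₂ a ^ (p + 1))) ≤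
      exp t * deriv F₁ t * deriv F₂ t := by
  have hF₂_deriv t (ht : t ∈ Ici a) : HasDerivAt F₂ (deriv F₂ t) t :=
    ((hF₂ t ht).differentiableAt two_ne_zero).hasDerivAt
  have hF₂_mono : MonotoneOn F₂ (Ici a) :=
    monotoneOn_Ici_of_hasDerivAt_nonneg hF₂_deriv hF₂'_nonneg
  refine mul_comp_le_of_hasDerivAt (F := F₂)
    (G := fun x => k₂ / (p + 1) * (x ^ (p + 1) - F₂ a ^ (p + 1))) (g := fun x => k₂ * x ^ p)
    (fun t ht => ((hasDerivAt_exp t).mul (hF₁ t ht).hasDerivAt_deriv).mul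
      (hF₂ t ht).hasDerivAt_deriv)
    (fun t ht => hasDerivAt_add_const_rpow (by linarith [mem_Ici.1 ht])) hF₂_deriv
    (fun t ht => ?_) (fun t ht => ?_) (fun t ht => ?_) ?_
  · have hFt := hF₂_pos t ht
    refine (((hasDerivAt_rpow_const (p := p + 1) (Or.inl hFt.ne')).sub_const
      (F₂ a ^ (p + 1))).const_mul (k₂ / (p + 1))).congr_deriv ?_
    rw [add_sub_cancel_right]
    field_simp
  · have hG : 0 ≤ F₂ t ^ (p + 1) - F₂ a ^ (p + 1) :=
      sub_nonneg.2 (rpow_le_rpow (hF₂_pos a self_mem_Ici).le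
        (hF₂_mono self_mem_Ici ht ht) hp.le)
    have htR : 0 < t + R := by linarith [mem_Ici.1 ht]
    have : 0 ≤ α₂ * (t + R) ^ (-α₂ - 1) * (k₂ / (p + 1) * (F₂ t ^ (p + 1) - F₂ a ^ (p + 1))) := by
      positivity
    linarith
  · have htR : 0 < t + R := by linarith [mem_Ici.1 ht]
    have hFt := hF₂_pos t ht
    have hsum : k₂ * (t + R) ^ (-α₂) * F₂ t ^ p ≤
        exp t * (deriv (deriv F₁) t + deriv F₁ t) :=
      (hF₁'' t ht).trans (le_mul_of_one_le_left (le_trans (by positivity) (hF₁'' t ht))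
        (one_le_exp (ha.trans ht)))
    have := mul_le_mul_of_nonneg_right hsum (hF₂'_nonneg t ht)
    have : 0 ≤ exp t * deriv F₁ t * deriv (deriv F₂) t :=
      mul_nonneg (mul_nonneg (exp_pos t).le (hF₁'_nonneg t ht)) (hF₂''_nonneg t ht)
    simp only [Pi.mul_apply]
    nlinarith
  · simpa using mul_nonneg (mul_nonneg (exp_pos a).le (hF₁'_nonneg a self_mem_Ici))
      (hF₂'_nonneg a self_mem_Ici)

lemma le_exp_mul_mul_deriv_sq {F₁ F₂ : ℝ → ℝ} {a R p k₂ α₂ : ℝ}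
    (ha : 0 ≤ a) (haR : 0 < a + R) (hp : 0 < p + 1) (hk₂ : 0 ≤ k₂) (hα₂ : 0 ≤ α₂)
    (hF₁ : ∀ t ∈ Ici a, ContDiffAt ℝ 2 F₁ t) (hF₂ : ∀ t ∈ Ici a, ContDiffAt ℝ 2 F₂ t)
    (hF₁_pos : ∀ t ∈ Ici a, 0 < F₁ t) (hF₂_pos : ∀ t ∈ Ici a, 0 < F₂ t)
    (hF₁'_nonneg : ∀ t ∈ Ici a, 0 ≤ deriv F₁ t) (hF₂'_nonneg : ∀ t ∈ Ici a, 0 ≤ deriv F₂ t)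
    (hF₂''_nonneg : ∀ t ∈ Ici a, 0 ≤ deriv (deriv F₂) t)
    (hF₁'' : ∀ t ∈ Ici a,
      k₂ * (t + R) ^ (-α₂) * F₂ t ^ p ≤ deriv (deriv F₁) t + deriv F₁ t) :
    ∀ t ∈ Ici a, (t + R) ^ (-α₂) * (k₂ / ((p + 1) * (p + 2)) *
        (F₂ t ^ (p + 2) - (p + 2) * F₂ a ^ (p + 1) * F₂ t + (p + 1) * F₂ a ^ (p + 2))) ≤
      exp t * F₁ t * deriv F₂ t ^ 2 := by
  have hA := le_exp_mul_deriv_mul_deriv ha haR hp hk₂ hα₂ hF₁ hF₂ hF₂_pos hF₁'_nonneg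
    hF₂'_nonneg hF₂''_nonneg hF₁''
  have hD := hF₂_pos a self_mem_Ici
  have hp2 : p + 2 = p + 1 + 1 := by ring
  have hp2_pos : 0 < p + 2 := by linarith
  refine mul_comp_le_of_hasDerivAt (F := F₂)
    (G := fun x => k₂ / ((p + 1) * (p + 2)) *
      (x ^ (p + 2) - (p + 2) * F₂ a ^ (p + 1) * x + (p + 1) * F₂ a ^ (p + 2)))
    (g := fun x => k₂ / (p + 1) * (x ^ (p + 1) - F₂ a ^ (p + 1)))
    (fun t ht => ((hasDerivAt_exp t).mul ((hF₁ t ht).differentiableAt two_ne_zero).hasDerivAt).mul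
      ((hF₂ t ht).hasDerivAt_deriv.pow 2))
    (fun t ht => hasDerivAt_add_const_rpow (by linarith [mem_Ici.1 ht]))
    (fun t ht => ((hF₂ t ht).differentiableAt two_ne_zero).hasDerivAt)
    (fun t ht => ?_) (fun t ht => ?_) (fun t ht => ?_) ?_
  · have hFt := hF₂_pos t ht
    refine (((((hasDerivAt_rpow_const (p := p + 2) (Or.inl hFt.ne'))).sub
      ((hasDerivAt_id _).const_mul ((p + 2) * F₂ a ^ (p + 1)))).add_const
      ((p + 1) * F₂ a ^ (p + 2))).const_mul _).congr_deriv ?_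
    rw [show p + 2 - 1 = p + 1 by ring]
    field_simp
  · have hYoung := add_one_mul_rpow_mul_le (hF₂_pos t ht).le hD.le hp.le
    rw [← hp2] at hYoung
    have htR : 0 < t + R := by linarith [mem_Ici.1 ht]
    have : 0 ≤ α₂ * (t + R) ^ (-α₂ - 1) * (k₂ / ((p + 1) * (p + 2)) *
        (F₂ t ^ (p + 2) - (p + 2) * F₂ a ^ (p + 1) * F₂ t + (p + 1) * F₂ a ^ (p + 2))) := by
      have : 0 ≤ F₂ t ^ (p + 2) - (p + 2) * F₂ a ^ (p + 1) * F₂ t + (p + 1) * F₂ a ^ (p + 2) := by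
        linarith
      positivity
    linarith
  · have := mul_le_mul_of_nonneg_right (hA t ht) (hF₂'_nonneg t ht)
    have : 0 ≤ exp t * F₁ t * (deriv F₂ t ^ 2 + 2 * deriv F₂ t * deriv (deriv F₂) t) := by
      have := hF₁_pos t ht
      have := hF₂'_nonneg t ht
      have := hF₂''_nonneg t ht
      positivity
    simp only [Pi.mul_apply]
    push_cast
    nlinarith
  · have hG : F₂ a ^ (p + 2) - (p + 2) * F₂ a ^ (p + 1) * F₂ a + (p + 1) * F₂ a ^ (p + 2) = 0 := by
      rw [hp2, rpow_add_one hD.ne']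
      ring
    simp only [hG, mul_zero]
    exact mul_nonneg (mul_nonneg (exp_pos a).le (hF₁_pos a self_mem_Ici).le)
      (sq_nonneg (deriv F₂ a))

lemma tendsto_atTop_of_const_mul_add_rpow_le {F : ℝ → ℝ} {k β R T : ℝ} (hk : 0 < k) (hβ : 0 < β)
    (hF : ∀ t, T ≤ t → k * (t + R) ^ β ≤ F t) : Tendsto F atTop atTop :=
  tendsto_atTop_mono' _ (eventually_atTop.2 ⟨T, hF⟩)
    (((tendsto_rpow_atTop hβ).comp
      (tendsto_atTop_add_const_right _ R tendsto_id)).const_mul_atTop hk)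

lemma eventually_rpow_div_four_le {F : ℝ → ℝ} {D p : ℝ} (hF : Tendsto F atTop atTop) (hD : 0 ≤ D)
    (hp : 0 < p + 1) :
    ∀ᶠ t in atTop,
      F t ^ (p + 2) / 4 ≤ F t ^ (p + 2) - (p + 2) * D ^ (p + 1) * F t + (p + 1) * D ^ (p + 2) := by
  filter_upwards [((tendsto_rpow_atTop hp).comp hF).eventually_ge_atTop
    (4 / 3 * (p + 2) * D ^ (p + 1)), hF.eventually_ge_atTop 0] with t hlarge hnonneg
  rw [Function.comp_apply] at hlarge
  have hsplit : F t ^ (p + 2) = F t ^ (p + 1) * F t := by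
    rw [show p + 2 = p + 1 + 1 by ring, rpow_add_one' hnonneg (by linarith)]
  have := mul_le_mul_of_nonneg_right hlarge hnonneg
  have : 0 ≤ (p + 1) * D ^ (p + 2) := by positivity
  nlinarith

theorem stmt_2_general
    (p q α₁ α₂ β₁ β₂ β₃ k₀ k₂ k₃ k₄ R T₃ : ℝ)
    (hp : 1 < p)
    (hα₂ : 0 ≤ α₂)
    (hβ₁ : 0 < β₁)
    (hk₀ : 0 < k₀) (hk₂ : 0 < k₂) (hk₃ : 0 < k₃) (hk₄ : 0 < k₄)
    (hR : 0 < R) (hT₃ : 0 < T₃)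
    (F₁ F₂ : ℝ → ℝ)
    (hF₁ : ContDiffOn ℝ 2 F₁ (Ici T₃)) (hF₂ : ContDiffOn ℝ 2 F₂ (Ici T₃))
    (h1 : ∀ t, T₃ ≤ t → k₀ * (t + R) ^ α₁ ≤ F₁ t)
    (h1' : ∀ t, T₃ ≤ t → 0 ≤ deriv F₁ t)
    (h2 : ∀ t, T₃ ≤ t →
      k₂ * (t + R) ^ (-α₂) * (F₂ t) ^ p ≤ deriv (deriv F₁) t + deriv F₁ t)
    (h3 : ∀ t, T₃ ≤ t → k₃ * (t + R) ^ β₁ ≤ F₂ t)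
    (h3' : ∀ t, T₃ ≤ t → 0 ≤ deriv F₂ t)
    (h4 : ∀ t, T₃ ≤ t →
      k₄ * Real.exp (-β₃ * t) * (t + R) ^ (-β₂) * (F₁ t) ^ q ≤ deriv (deriv F₂) t) :
    ∃ T₅, T₃ ≤ T₅ ∧ ∀ t, T₅ ≤ t →
      k₂ / (4 * (p + 1) * (p + 2)) * (t + R) ^ (-α₂) * (F₂ t) ^ (p + 2) ≤
        Real.exp t * F₁ t * (deriv F₂ t) ^ (2 : ℕ) := by
  -- only at interior points of `Ici T₃` does `deriv` see the derivatives of `F₁` and `F₂`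
  set a := T₃ + 1
  have hp1 : 0 < p + 1 := by linarith
  have hT₃a : ∀ t ∈ Ici a, T₃ ≤ t := fun t ht => by linarith [mem_Ici.1 ht]
  have htR : ∀ t ∈ Ici a, 0 < t + R := fun t ht => by linarith [mem_Ici.1 ht]
  have hC2 : ∀ F : ℝ → ℝ, ContDiffOn ℝ 2 F (Ici T₃) → ∀ t ∈ Ici a, ContDiffAt ℝ 2 F t :=
    fun F hF t ht => hF.contDiffAt (Ici_mem_nhds (by linarith [mem_Ici.1 ht]))
  have hF₁_pos : ∀ t ∈ Ici a, 0 < F₁ t := fun t ht =>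
    (mul_pos hk₀ (rpow_pos_of_pos (htR t ht) _)).trans_le (h1 t (hT₃a t ht))
  have hF₂_pos : ∀ t ∈ Ici a, 0 < F₂ t := fun t ht =>
    (mul_pos hk₃ (rpow_pos_of_pos (htR t ht) _)).trans_le (h3 t (hT₃a t ht))
  have hF₂''_nonneg : ∀ t ∈ Ici a, 0 ≤ deriv (deriv F₂) t := fun t ht => by
    have := hF₁_pos t ht
    have := htR t ht
    exact le_trans (by positivity) (h4 t (hT₃a t ht))
  have hB := le_exp_mul_mul_deriv_sq (by linarith) (htR a self_mem_Ici) hp1 hk₂.le hα₂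
    (hC2 F₁ hF₁) (hC2 F₂ hF₂) hF₁_pos hF₂_pos
    (fun t ht => h1' t (hT₃a t ht)) (fun t ht => h3' t (hT₃a t ht)) hF₂''_nonneg
    (fun t ht => h2 t (hT₃a t ht))
  obtain ⟨T, hT⟩ := eventually_atTop.1 (eventually_rpow_div_four_le
    (tendsto_atTop_of_const_mul_add_rpow_le hk₃ hβ₁ h3) (hF₂_pos a self_mem_Ici).le hp1)
  refine ⟨max a T, by linarith [le_max_left a T], fun t ht => ?_⟩
  have hta : t ∈ Ici a := le_of_max_le_left ht
  calc k₂ / (4 * (p + 1) * (p + 2)) * (t + R) ^ (-α₂) * F₂ t ^ (p + 2)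
      = (t + R) ^ (-α₂) * (k₂ / ((p + 1) * (p + 2)) * (F₂ t ^ (p + 2) / 4)) := by
        field_simp
    _ ≤ (t + R) ^ (-α₂) * (k₂ / ((p + 1) * (p + 2)) *
        (F₂ t ^ (p + 2) - (p + 2) * F₂ a ^ (p + 1) * F₂ t + (p + 1) * F₂ a ^ (p + 2))) := by
      have := htR t hta
      gcongr
      exact hT t (le_of_max_le_right ht)
    _ ≤ exp t * F₁ t * deriv F₂ t ^ 2 := hB t hta

/-- Lower bound for e^t F₁ (F₂')² for large times. -/
theorem stmt_2
    (p q α₁ α₂ β₁ β₂ β₃ k₀ k₂ k₃ k₄ R T₃ : ℝ)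
    (hp : 1 < p) (hq : 1 < q)
    (hα₂ : 0 ≤ α₂) (hβ₂ : 0 ≤ β₂) (hβ₃ : 0 ≤ β₃)
    (hα₁ : 0 < α₁) (hβ₁ : 0 < β₁)
    (hk₀ : 0 < k₀) (hk₂ : 0 < k₂) (hk₃ : 0 < k₃) (hk₄ : 0 < k₄)
    (hR : 0 < R) (hT₃ : 0 < T₃)
    (F₁ F₂ : ℝ → ℝ)
    (hF₁ : ContDiffOn ℝ 2 F₁ (Ici T₃)) (hF₂ : ContDiffOn ℝ 2 F₂ (Ici T₃))
    (h1 : ∀ t, T₃ ≤ t → k₀ * (t + R) ^ α₁ ≤ F₁ t)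
    (h1' : ∀ t, T₃ ≤ t → 0 ≤ deriv F₁ t)
    (h2 : ∀ t, T₃ ≤ t →
      k₂ * (t + R) ^ (-α₂) * (F₂ t) ^ p ≤ deriv (deriv F₁) t + deriv F₁ t)
    (h3 : ∀ t, T₃ ≤ t → k₃ * (t + R) ^ β₁ ≤ F₂ t)
    (h3' : ∀ t, T₃ ≤ t → 0 ≤ deriv F₂ t)
    (h4 : ∀ t, T₃ ≤ t →
      k₄ * Real.exp (-β₃ * t) * (t + R) ^ (-β₂) * (F₁ t) ^ q ≤ deriv (deriv F₂) t) :
    ∃ T₅, T₃ ≤ T₅ ∧ ∀ t, T₅ ≤ t →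
      k₂ / (4 * (p + 1) * (p + 2)) * (t + R) ^ (-α₂) * (F₂ t) ^ (p + 2) ≤
        Real.exp t * F₁ t * (deriv F₂ t) ^ (2 : ℕ) :=
  stmt_2_general p q α₁ α₂ β₁ β₂ β₃ k₀ k₂ k₃ k₄ R T₃ hp hα₂ hβ₁ hk₀ hk₂ hk₃ hk₄ hR hT₃ F₁ F₂ hF₁ hF₂
    h1 h1' h2 h3 h3' h4
end

section
/- There exists T₆ ≥ T₃ such that for all t ≥ T₆ one has F₂'(t) ≥ k₅^{1/(2(q+1))} · e^{-((q+β₃)/(2(q+1))) t} · (t+R)^{-(β₂+α₂q)/(2(q+1))} · F₂(t)^{((p+2)q+1)/(2(q+1))}, where k₅ := (2q+1) k₂^q k₄ / (2((p+2)q+1)(4(p+1)(p+2))^q). -/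
/-!
Since `F₂'' > 0`, `F₂'` increases, so on the window `[t - d, t]` with `d = F₂ t / (2 F₂' t)` the
convex function `F₂` stays above `F₂ t / 2`, and `t - d → ∞` because `d` grows at most like `t / 2`.
Integrating `F₁'' + F₁' ≥ k₂ (t + R)^(-α₂) F₂^p` twice over this window gives
`F₁ t · F₂'(t)² ≥ C e^(-t) (t + R)^(-α₂) F₂(t)^(p+2)` with `C = k₂ / (4 (p + 1) (p + 2))`.
Inserted into the inequality for `F₂''`, this yields `(F₂'^(2q+2))' ≥ c(t) (F₂^M)'` on `[T₁, t]`,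
with `M = (p + 2) q + 1` and a weight `c` that decreases in `t`; hence
`F₂'(t)^(2q+2) ≥ c(t) (F₂(t)^M - F₂(T₁)^M) ≥ c(t) F₂(t)^M / 2` as soon as `F₂ → ∞` has doubled
`F₂^M`, and the claim is its `(2q+2)`-th root.
-/

open Real Set Filter Topology

lemma le_of_hasDerivAt_nonneg {f f' : ℝ → ℝ} {a b : ℝ} (hab : a ≤ b)
    (hf : ∀ x ∈ Icc a b, HasDerivAt f (f' x) x) (hf' : ∀ x ∈ Icc a b, 0 ≤ f' x) : f a ≤ f b := by
  refine monotoneOn_of_hasDerivWithinAt_nonneg (convex_Icc a b)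
    (fun x hx => (hf x hx).continuousAt.continuousWithinAt) (fun x hx => ?_)
    (fun x hx => hf' x (interior_subset hx)) (left_mem_Icc.2 hab) (right_mem_Icc.2 hab) hab
  exact (hf x (interior_subset hx)).hasDerivWithinAt

lemma sq_mul_exp_neg_div_two_le {d : ℝ} (hd : 0 ≤ d) :
    d ^ 2 * exp (-d) / 2 ≤ d - 1 + exp (-d) := by
  have key : 0 ≤ (d - 1) * exp d + 1 - d ^ 2 / 2 := by
    have := le_of_hasDerivAt_nonneg (f := fun x => (x - 1) * exp x + 1 - x ^ 2 / 2)
      (f' := fun x => x * (exp x - 1)) hd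
      (fun x _ => (((((hasDerivAt_id' x).sub_const 1).fun_mul (hasDerivAt_exp x)).add_const
        1).fun_sub ((hasDerivAt_pow 2 x).div_const 2)).congr_deriv (by push_cast; ring))
      (fun x hx => mul_nonneg hx.1 (sub_nonneg.2 (one_le_exp hx.1)))
    norm_num at this
    linarith
  have hexp : exp d * exp (-d) = 1 := by rw [← exp_add, add_neg_cancel, exp_zero]
  nlinarith [mul_nonneg key (exp_pos (-d)).le]

lemma mul_sub_one_add_exp_le_of_deriv2_add_deriv_ge {f f' f'' : ℝ → ℝ} {a b G : ℝ} (hab : a ≤ b)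
    (hf : ∀ x ∈ Icc a b, HasDerivAt f (f' x) x) (hf' : ∀ x ∈ Icc a b, HasDerivAt f' (f'' x) x)
    (hG : ∀ x ∈ Icc a b, G ≤ f'' x + f' x) (ha : 0 ≤ f a) (ha' : 0 ≤ f' a) :
    G * (b - a - 1 + exp (a - b)) ≤ f b := by
  have hf'_ge : ∀ x ∈ Icc a b, G * (1 - exp (a - x)) ≤ f' x := by
    intro x hx
    have hmono : exp a * (f' a - G) ≤ exp x * (f' x - G) :=
      le_of_hasDerivAt_nonneg (f' := fun y => exp y * (f' y - G) + exp y * f'' y) hx.1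
        (fun y hy => (hasDerivAt_exp y).mul ((hf' y ⟨hy.1, hy.2.trans hx.2⟩).sub_const G))
        (fun y hy => by nlinarith [exp_pos y, hG y ⟨hy.1, hy.2.trans hx.2⟩])
    have hexp : exp x * (G * (1 - exp (a - x))) = G * exp x - G * exp a := by
      rw [← sub_add_cancel a x, exp_add, add_sub_cancel_right]; ring
    refine le_of_mul_le_mul_left ?_ (exp_pos x)
    nlinarith [mul_nonneg (exp_pos a).le ha']
  have hmono : f a - G * (a + exp (a - a)) ≤ f b - G * (b + exp (a - b)) :=
    le_of_hasDerivAt_nonneg (f' := fun x => f' x - G * (1 + exp (a - x) * (0 - 1))) hab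
      (fun x hx => (hf x hx).sub
        (((hasDerivAt_id x).add ((hasDerivAt_const x a).sub (hasDerivAt_id x)).exp).const_mul G))
      (fun x hx => by linarith [hf'_ge x hx])
  rw [sub_self, exp_zero] at hmono
  linarith

lemma mul_sub_rpow_le_sub_deriv_rpow {f f' f'' : ℝ → ℝ} {a b c n M : ℝ} (hab : a ≤ b)
    (hn : 1 ≤ n) (hM : 1 ≤ M)
    (hf : ∀ x ∈ Icc a b, HasDerivAt f (f' x) x) (hf' : ∀ x ∈ Icc a b, HasDerivAt f' (f'' x) x)
    (h : ∀ x ∈ Icc a b, c * (f' x * M * f x ^ (M - 1)) ≤ f'' x * n * f' x ^ (n - 1)) :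
    c * (f b ^ M - f a ^ M) ≤ f' b ^ n - f' a ^ n := by
  have := le_of_hasDerivAt_nonneg (f := fun x => f' x ^ n - c * f x ^ M)
    (f' := fun x => f'' x * n * f' x ^ (n - 1) - c * (f' x * M * f x ^ (M - 1))) hab
    (fun x hx => ((hf' x hx).rpow_const (Or.inr hn)).sub
      (((hf x hx).rpow_const (Or.inr hM)).const_mul c))
    (fun x hx => sub_nonneg.2 (h x hx))
  linarith

lemma sub_le_deriv_mul_sub_of_monotoneOn {g : ℝ → ℝ} {T s t : ℝ}
    (hg : DifferentiableOn ℝ g (Ioi T)) (hg' : MonotoneOn (deriv g) (Ioi T)) (hs : T < s)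
    (hst : s ≤ t) : g t - g s ≤ deriv g t * (t - s) := by
  have hsub : Icc s t ⊆ Ioi T := fun x hx => hs.trans_le hx.1
  refine (convex_Icc s t).image_sub_le_mul_sub_of_deriv_le ((hg.mono hsub).continuousOn)
    (hg.mono (interior_subset.trans hsub)) (fun x hx => ?_) s (left_mem_Icc.2 hst) t
    (right_mem_Icc.2 hst) hst
  rw [interior_Icc] at hx
  exact hg' (hs.trans hx.1) (hs.trans_le hst) hx.2.le

lemma tendsto_sub_div_two_mul_deriv {g : ℝ → ℝ} {T T₀ : ℝ}
    (hg : DifferentiableOn ℝ g (Ioi T)) (hg' : MonotoneOn (deriv g) (Ioi T)) (hT₀ : T < T₀)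
    (hg₀ : 0 ≤ g T₀) (hg'₀ : 0 < deriv g T₀) :
    Tendsto (fun t => t - g t / (2 * deriv g t)) atTop atTop := by
  refine tendsto_atTop_mono' atTop ?_ (tendsto_atTop_add_const_right _
    (T₀ / 2 - g T₀ / (2 * deriv g T₀)) (tendsto_id.atTop_div_const two_pos))
  filter_upwards [eventually_ge_atTop T₀] with t ht
  have hmono : deriv g T₀ ≤ deriv g t := hg' hT₀ (hT₀.trans_le ht) ht
  have hpos : 0 < deriv g t := hg'₀.trans_le hmono
  have htan := sub_le_deriv_mul_sub_of_monotoneOn hg hg' hT₀ ht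
  have h₀ : g T₀ / (2 * deriv g t) ≤ g T₀ / (2 * deriv g T₀) :=
    div_le_div_of_nonneg_left hg₀ (by positivity) (by linarith)
  have ht' : g t / (2 * deriv g t) ≤ g T₀ / (2 * deriv g t) + (t - T₀) / 2 := by
    rw [div_add_div _ _ (by positivity) two_ne_zero,
      div_le_div_iff₀ (by positivity) (by positivity)]
    nlinarith
  simp only [id]
  linarith

lemma hasDerivAt_deriv_of_contDiffOn {F : ℝ → ℝ} {T t : ℝ} (hF : ContDiffOn ℝ 2 F (Ici T))
    (ht : T < t) : HasDerivAt F (deriv F t) t ∧ HasDerivAt (deriv F) (deriv (deriv F) t) t := by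
  have hF' : ContDiffOn ℝ 2 F (Ioi T) := hF.mono Ioi_subset_Ici_self
  have hnhds : Ioi T ∈ 𝓝 t := isOpen_Ioi.mem_nhds ht
  exact ⟨((hF'.differentiableOn two_ne_zero).differentiableAt hnhds).hasDerivAt,
    (((hF'.deriv_of_isOpen isOpen_Ioi le_rfl).differentiableOn one_ne_zero).differentiableAt
      hnhds).hasDerivAt⟩

lemma strictMonoOn_deriv_of_contDiffOn {F : ℝ → ℝ} {T : ℝ} (hF : ContDiffOn ℝ 2 F (Ici T))
    (h : ∀ t > T, 0 < deriv (deriv F) t) : StrictMonoOn (deriv F) (Ioi T) :=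
  strictMonoOn_of_deriv_pos (convex_Ioi T)
    (fun _ ht => (hasDerivAt_deriv_of_contDiffOn hF ht).2.continuousAt.continuousWithinAt)
    (fun t ht => h t (by rwa [interior_Ioi] at ht))

lemma tendsto_atTop_of_mul_rpow_le {F : ℝ → ℝ} {k a R T : ℝ} (hk : 0 < k) (ha : 0 < a)
    (h : ∀ t, T ≤ t → k * (t + R) ^ a ≤ F t) : Tendsto F atTop atTop :=
  tendsto_atTop_mono' atTop (eventually_atTop.2 ⟨T, h⟩)
    (((tendsto_rpow_atTop ha).comp (tendsto_atTop_add_const_right _ R tendsto_id)).const_mul_atTop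
      hk)

lemma le_of_mul_exp_mul_rpow_le_rpow {k a t x b X M n Y : ℝ} (hn : 0 < n) (hk : 0 ≤ k)
    (hx : 0 ≤ x) (hX : 0 ≤ X) (hY : 0 ≤ Y) (h : k * (exp (-(a * t)) * x ^ (-b)) * X ^ M ≤ Y ^ n) :
    k ^ (1 / n) * exp (-(a / n) * t) * x ^ (-(b / n)) * X ^ (M / n) ≤ Y := by
  have := rpow_le_rpow (by positivity) h (one_div_nonneg.2 hn.le)
  rw [← rpow_mul hY, mul_one_div_cancel hn.ne', rpow_one, mul_rpow (by positivity) (by positivity),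
    mul_rpow hk (by positivity), mul_rpow (by positivity) (by positivity), ← exp_mul,
    ← rpow_mul hx, ← rpow_mul hX, ← mul_assoc] at this
  convert this using 4 <;> ring_nf

lemma const_mul_le_of_mul_sub_le {p q k₂ k₄ ω X X₁ Y : ℝ} (hp : 0 ≤ p) (hq : 0 ≤ q)
    (hk₂ : 0 ≤ k₂) (hk₄ : 0 ≤ k₄) (hω : 0 ≤ ω) (hX₁ : 0 ≤ X₁) (hX : 2 * X₁ ≤ X)
    (h : 2 * (q + 1) * k₄ * (k₂ / (4 * (p + 1) * (p + 2))) ^ q / ((p + 2) * q + 1) * ω *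
      (X - X₁) ≤ Y) :
    (2 * q + 1) * k₂ ^ q * k₄ / (2 * ((p + 2) * q + 1) * (4 * (p + 1) * (p + 2)) ^ q) * ω * X
      ≤ Y := by
  set A := 2 * (q + 1) * k₄ * (k₂ / (4 * (p + 1) * (p + 2))) ^ q / ((p + 2) * q + 1)
  have hA : (2 * q + 1) * k₂ ^ q * k₄ / (2 * ((p + 2) * q + 1) * (4 * (p + 1) * (p + 2)) ^ q)
      ≤ A / 2 := by
    rw [show A / 2 = (2 * q + 2) * k₂ ^ q * k₄ /
      (2 * ((p + 2) * q + 1) * (4 * (p + 1) * (p + 2)) ^ q) by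
        simp only [A]; rw [div_rpow hk₂ (by positivity)]; field_simp]
    gcongr
    linarith
  have hAω : 0 ≤ A * ω := by positivity
  calc _ ≤ A / 2 * ω * X := by gcongr; linarith
    _ = A * ω * (X / 2) := by ring
    _ ≤ A * ω * (X - X₁) := by gcongr; linarith
    _ ≤ Y := h

section

variable {p q α₂ β₂ β₃ k₂ k₄ R T : ℝ} {F₁ F₂ : ℝ → ℝ}

lemma le_of_half_le_on_Icc (hp : 0 ≤ p) (hk₂ : 0 ≤ k₂) (hα₂ : 0 ≤ α₂) (hTR : 0 ≤ T + R)
    (hF₁ : ContDiffOn ℝ 2 F₁ (Ici T))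
    (h1 : ∀ s, T ≤ s → 0 ≤ F₁ s) (h1' : ∀ s, T ≤ s → 0 ≤ deriv F₁ s)
    (h2 : ∀ s, T ≤ s → k₂ * (s + R) ^ (-α₂) * F₂ s ^ p ≤ deriv (deriv F₁) s + deriv F₁ s)
    {t d : ℝ} (hd : 0 ≤ d) (htd : T < t - d) (hF₂t : 0 ≤ F₂ t)
    (hF₂ : ∀ s ∈ Icc (t - d) t, F₂ t / 2 ≤ F₂ s) :
    k₂ * (t + R) ^ (-α₂) * (F₂ t / 2) ^ p * (d ^ 2 * exp (-d) / 2) ≤ F₁ t := by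
  have htR : 0 < t + R := by linarith
  have hG : ∀ s ∈ Icc (t - d) t,
      k₂ * (t + R) ^ (-α₂) * (F₂ t / 2) ^ p ≤ deriv (deriv F₁) s + deriv F₁ s := by
    intro s hs
    have hsR : 0 < s + R := by linarith [hs.1]
    refine le_trans (mul_le_mul (mul_le_mul_of_nonneg_left ?_ hk₂) ?_ (by positivity)
      (by positivity)) (h2 s (htd.trans_le hs.1).le)
    · exact rpow_le_rpow_of_nonpos hsR (by linarith [hs.2]) (neg_nonpos.2 hα₂)
    · exact rpow_le_rpow (by positivity) (hF₂ s hs) hp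
  have := mul_sub_one_add_exp_le_of_deriv2_add_deriv_ge (by linarith)
    (fun s hs => (hasDerivAt_deriv_of_contDiffOn hF₁ (htd.trans_le hs.1)).1)
    (fun s hs => (hasDerivAt_deriv_of_contDiffOn hF₁ (htd.trans_le hs.1)).2) hG
    (h1 _ htd.le) (h1' _ htd.le)
  rw [sub_sub_cancel, sub_sub_cancel_left] at this
  exact (mul_le_mul_of_nonneg_left (sq_mul_exp_neg_div_two_le hd) (by positivity)).trans this

lemma exists_le_mul_deriv_sq (hp : 0 < p) (hk₂ : 0 ≤ k₂) (hα₂ : 0 ≤ α₂) (hTR : 0 ≤ T + R)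
    (hF₁ : ContDiffOn ℝ 2 F₁ (Ici T))
    (h1 : ∀ s, T ≤ s → 0 ≤ F₁ s) (h1' : ∀ s, T ≤ s → 0 ≤ deriv F₁ s)
    (h2 : ∀ s, T ≤ s → k₂ * (s + R) ^ (-α₂) * F₂ s ^ p ≤ deriv (deriv F₁) s + deriv F₁ s)
    (hF₂ : ContDiffOn ℝ 2 F₂ (Ici T)) (hF₂' : MonotoneOn (deriv F₂) (Ioi T))
    (hF₂pos : ∀ s, T ≤ s → 0 < F₂ s) {T₀ : ℝ} (hT₀ : T < T₀) (hF₂'₀ : 0 < deriv F₂ T₀) :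
    ∃ T₁, T₀ ≤ T₁ ∧ ∀ t, T₁ ≤ t → k₂ / (4 * (p + 1) * (p + 2)) * exp (-t) * (t + R) ^ (-α₂) *
      F₂ t ^ (p + 2) ≤ F₁ t * deriv F₂ t ^ 2 := by
  have hF₂d : DifferentiableOn ℝ F₂ (Ioi T) :=
    (hF₂.differentiableOn two_ne_zero).mono Ioi_subset_Ici_self
  have hwin := tendsto_sub_div_two_mul_deriv hF₂d hF₂' hT₀ (hF₂pos _ hT₀.le).le hF₂'₀
  obtain ⟨T₁, hT₁⟩ := eventually_atTop.1 ((hwin.eventually_gt_atTop T).and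
    ((tendsto_exp_atTop.comp hwin).eventually_ge_atTop (2 ^ (p + 1) / ((p + 1) * (p + 2)))))
  refine ⟨max T₁ T₀, le_max_right _ _, fun t ht => ?_⟩
  obtain ⟨htd, hexp⟩ := hT₁ t (le_of_max_le_left ht)
  have ht₀ : T₀ ≤ t := le_of_max_le_right ht
  -- On `[t - d, t]` the convex `F₂` stays above `F₂ t / 2`; waiting until
  -- `exp (t - d) ≥ 2 ^ (p + 1) / ((p + 1) * (p + 2))` produces the constant of the statement.
  set d := F₂ t / (2 * deriv F₂ t) with hd
  have hY : 0 < deriv F₂ t := hF₂'₀.trans_le (hF₂' hT₀ (hT₀.trans_le ht₀) ht₀)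
  have hX : 0 < F₂ t := hF₂pos t (hT₀.trans_le ht₀).le
  have hdY : d * deriv F₂ t = F₂ t / 2 := by rw [hd]; field_simp
  have hwindow := le_of_half_le_on_Icc hp.le hk₂ hα₂ hTR hF₁ h1 h1' h2 (by positivity) htd hX.le
    (fun s hs => by
      have := sub_le_deriv_mul_sub_of_monotoneOn hF₂d hF₂' (htd.trans_le hs.1) hs.2
      nlinarith [hs.1])
  have htR : 0 < t + R := by linarith [hT₀.trans_le ht₀]
  have e1 : exp (-d) = exp (t - d) * exp (-t) := by rw [← exp_add]; ring_nf
  have e2 : F₂ t ^ (p + 2) = F₂ t ^ p * F₂ t ^ 2 := by rw [rpow_add hX, rpow_two]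
  have e3 : (F₂ t / 2) ^ p = F₂ t ^ p / 2 ^ p := div_rpow hX.le zero_le_two p
  have e4 : (2 : ℝ) ^ (p + 1) = 2 ^ p * 2 := rpow_add_one two_ne_zero p
  calc k₂ / (4 * (p + 1) * (p + 2)) * exp (-t) * (t + R) ^ (-α₂) * F₂ t ^ (p + 2)
      = k₂ * (t + R) ^ (-α₂) * (F₂ t ^ p / 2 ^ p) * (F₂ t / 2) ^ 2 *
          (2 ^ (p + 1) / ((p + 1) * (p + 2)) * exp (-t)) / 2 := by
        rw [e2, e4]; field_simp; ring
    _ ≤ k₂ * (t + R) ^ (-α₂) * (F₂ t ^ p / 2 ^ p) * (F₂ t / 2) ^ 2 *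
          (exp (t - d) * exp (-t)) / 2 := by gcongr; exact hexp
    _ = k₂ * (t + R) ^ (-α₂) * (F₂ t / 2) ^ p * (d ^ 2 * exp (-d) / 2) * deriv F₂ t ^ 2 := by
        rw [e3, e1, ← hdY]; ring
    _ ≤ F₁ t * deriv F₂ t ^ 2 := mul_le_mul_of_nonneg_right hwindow (sq_nonneg _)

lemma le_deriv2_mul_deriv_rpow {C s : ℝ} (hq : 0 ≤ q) (hk₄ : 0 ≤ k₄) (hC : 0 ≤ C)
    (hsR : 0 < s + R) (hX : 0 < F₂ s) (hY : 0 ≤ deriv F₂ s) (hZ : 0 ≤ F₁ s)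
    (h4 : k₄ * exp (-β₃ * s) * (s + R) ^ (-β₂) * F₁ s ^ q ≤ deriv (deriv F₂) s)
    (hlow : C * exp (-s) * (s + R) ^ (-α₂) * F₂ s ^ (p + 2) ≤ F₁ s * deriv F₂ s ^ 2) :
    k₄ * C ^ q * (exp (-((q + β₃) * s)) * (s + R) ^ (-(β₂ + α₂ * q))) * F₂ s ^ ((p + 2) * q)
      ≤ deriv (deriv F₂) s * deriv F₂ s ^ (2 * q) := by
  have hlow_q : C ^ q * exp (-s * q) * (s + R) ^ (-α₂ * q) * F₂ s ^ ((p + 2) * q)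
      ≤ F₁ s ^ q * deriv F₂ s ^ (2 * q) := by
    have := rpow_le_rpow (by positivity) hlow hq
    rwa [mul_rpow (by positivity) (by positivity), mul_rpow (by positivity) (by positivity),
      mul_rpow hC (by positivity), ← exp_mul, ← rpow_mul hsR.le, ← rpow_mul hX.le,
      mul_rpow hZ (sq_nonneg _), ← rpow_two, ← rpow_mul hY] at this
  have e1 : exp (-((q + β₃) * s)) = exp (-β₃ * s) * exp (-s * q) := by rw [← exp_add]; ring_nf
  have e2 : (s + R) ^ (-(β₂ + α₂ * q)) = (s + R) ^ (-β₂) * (s + R) ^ (-α₂ * q) := by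
    rw [← rpow_add hsR]; ring_nf
  calc k₄ * C ^ q * (exp (-((q + β₃) * s)) * (s + R) ^ (-(β₂ + α₂ * q))) * F₂ s ^ ((p + 2) * q)
      = k₄ * exp (-β₃ * s) * (s + R) ^ (-β₂) *
          (C ^ q * exp (-s * q) * (s + R) ^ (-α₂ * q) * F₂ s ^ ((p + 2) * q)) := by
        rw [e1, e2]; ring
    _ ≤ k₄ * exp (-β₃ * s) * (s + R) ^ (-β₂) * (F₁ s ^ q * deriv F₂ s ^ (2 * q)) := by gcongr
    _ ≤ deriv (deriv F₂) s * deriv F₂ s ^ (2 * q) := by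
        rw [← mul_assoc]; exact mul_le_mul_of_nonneg_right h4 (by positivity)

lemma le_deriv_rpow_of_le_mul_deriv_sq {C T₁ : ℝ} (hp : 0 ≤ p) (hq : 0 ≤ q) (hα₂ : 0 ≤ α₂)
    (hβ₂ : 0 ≤ β₂) (hβ₃ : 0 ≤ β₃) (hk₄ : 0 ≤ k₄) (hC : 0 ≤ C) (hTR : 0 ≤ T + R) (hT₁ : T < T₁)
    (hF₂ : ContDiffOn ℝ 2 F₂ (Ici T))
    (hF₁pos : ∀ s, T ≤ s → 0 ≤ F₁ s) (hF₂pos : ∀ s, T ≤ s → 0 < F₂ s)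
    (hF₂'pos : ∀ s, T₁ ≤ s → 0 < deriv F₂ s)
    (h4 : ∀ s, T ≤ s →
      k₄ * exp (-β₃ * s) * (s + R) ^ (-β₂) * F₁ s ^ q ≤ deriv (deriv F₂) s)
    (hlow : ∀ s, T₁ ≤ s →
      C * exp (-s) * (s + R) ^ (-α₂) * F₂ s ^ (p + 2) ≤ F₁ s * deriv F₂ s ^ 2)
    {t : ℝ} (ht : T₁ ≤ t) :
    2 * (q + 1) * k₄ * C ^ q / ((p + 2) * q + 1) *
        (exp (-((q + β₃) * t)) * (t + R) ^ (-(β₂ + α₂ * q))) *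
        (F₂ t ^ ((p + 2) * q + 1) - F₂ T₁ ^ ((p + 2) * q + 1))
      ≤ deriv F₂ t ^ (2 * (q + 1)) := by
  have hM : 0 < (p + 2) * q + 1 := by positivity
  refine (mul_sub_rpow_le_sub_deriv_rpow ht (by linarith) (by nlinarith)
    (fun s hs => (hasDerivAt_deriv_of_contDiffOn hF₂ (hT₁.trans_le hs.1)).1)
    (fun s hs => (hasDerivAt_deriv_of_contDiffOn hF₂ (hT₁.trans_le hs.1)).2) (fun s hs => ?_)).trans
    (sub_le_self _ (rpow_nonneg (hF₂'pos T₁ le_rfl).le _))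
  have hsT : T < s := hT₁.trans_le hs.1
  have hsR : 0 < s + R := by linarith
  have hY := hF₂'pos s hs.1
  have hX := hF₂pos s hsT.le
  have hweight : exp (-((q + β₃) * t)) * (t + R) ^ (-(β₂ + α₂ * q))
      ≤ exp (-((q + β₃) * s)) * (s + R) ^ (-(β₂ + α₂ * q)) := by
    have htR : 0 < t + R := by linarith [hs.2]
    exact mul_le_mul (exp_le_exp.2 (by nlinarith [hs.2]))
      (rpow_le_rpow_of_nonpos hsR (by linarith [hs.2]) (by nlinarith)) (by positivity)
      (by positivity)
  have hpt := le_deriv2_mul_deriv_rpow hq hk₄ hC hsR hX hY.le (hF₁pos s hsT.le) (h4 s hsT.le)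
    (hlow s hs.1)
  rw [add_sub_cancel_right, show 2 * (q + 1) - 1 = 2 * q + 1 by ring, rpow_add_one hY.ne']
  calc 2 * (q + 1) * k₄ * C ^ q / ((p + 2) * q + 1) *
        (exp (-((q + β₃) * t)) * (t + R) ^ (-(β₂ + α₂ * q))) *
        (deriv F₂ s * ((p + 2) * q + 1) * F₂ s ^ ((p + 2) * q))
      = 2 * (q + 1) * deriv F₂ s * (k₄ * C ^ q *
          (exp (-((q + β₃) * t)) * (t + R) ^ (-(β₂ + α₂ * q))) * F₂ s ^ ((p + 2) * q)) := by
        field_simp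
    _ ≤ 2 * (q + 1) * deriv F₂ s * (k₄ * C ^ q *
          (exp (-((q + β₃) * s)) * (s + R) ^ (-(β₂ + α₂ * q))) * F₂ s ^ ((p + 2) * q)) := by
        gcongr
    _ ≤ 2 * (q + 1) * deriv F₂ s * (deriv (deriv F₂) s * deriv F₂ s ^ (2 * q)) := by gcongr
    _ = deriv (deriv F₂) s * (2 * (q + 1)) * (deriv F₂ s ^ (2 * q) * deriv F₂ s) := by ring

end

theorem stmt_3_general
    (p q α₁ α₂ β₁ β₂ β₃ k₀ k₂ k₃ k₄ R T₃ : ℝ)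
    (hp : 1 < p) (hq : 1 < q)
    (hα₂ : 0 ≤ α₂) (hβ₂ : 0 ≤ β₂) (hβ₃ : 0 ≤ β₃)
    (hβ₁ : 0 < β₁)
    (hk₀ : 0 < k₀) (hk₂ : 0 < k₂) (hk₃ : 0 < k₃) (hk₄ : 0 < k₄)
    (hR : 0 < R) (hT₃ : 0 < T₃)
    (F₁ F₂ : ℝ → ℝ)
    (hF₁ : ContDiffOn ℝ 2 F₁ (Ici T₃)) (hF₂ : ContDiffOn ℝ 2 F₂ (Ici T₃))
    (h1 : ∀ t, T₃ ≤ t → k₀ * (t + R) ^ α₁ ≤ F₁ t)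
    (h1' : ∀ t, T₃ ≤ t → 0 ≤ deriv F₁ t)
    (h2 : ∀ t, T₃ ≤ t →
      k₂ * (t + R) ^ (-α₂) * (F₂ t) ^ p ≤ deriv (deriv F₁) t + deriv F₁ t)
    (h3 : ∀ t, T₃ ≤ t → k₃ * (t + R) ^ β₁ ≤ F₂ t)
    (h3' : ∀ t, T₃ ≤ t → 0 ≤ deriv F₂ t)
    (h4 : ∀ t, T₃ ≤ t →
      k₄ * Real.exp (-β₃ * t) * (t + R) ^ (-β₂) * (F₁ t) ^ q ≤ deriv (deriv F₂) t) :
    ∃ T₆, T₃ ≤ T₆ ∧ ∀ t, T₆ ≤ t →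
      ((2 * q + 1) * k₂ ^ q * k₄ / (2 * ((p + 2) * q + 1) * (4 * (p + 1) * (p + 2)) ^ q))
          ^ (1 / (2 * (q + 1))) *
        Real.exp (-((q + β₃) / (2 * (q + 1))) * t) *
        (t + R) ^ (-((β₂ + α₂ * q) / (2 * (q + 1)))) *
        (F₂ t) ^ (((p + 2) * q + 1) / (2 * (q + 1))) ≤ deriv F₂ t := by
  have htR : ∀ t, T₃ ≤ t → 0 < t + R := fun t ht => by linarith
  have hF₁pos : ∀ t, T₃ ≤ t → 0 < F₁ t := fun t ht =>
    (mul_pos hk₀ (rpow_pos_of_pos (htR t ht) _)).trans_le (h1 t ht)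
  have hF₂pos : ∀ t, T₃ ≤ t → 0 < F₂ t := fun t ht =>
    (mul_pos hk₃ (rpow_pos_of_pos (htR t ht) _)).trans_le (h3 t ht)
  have hF₂'mono : StrictMonoOn (deriv F₂) (Ioi T₃) :=
    strictMonoOn_deriv_of_contDiffOn hF₂ fun t ht => (mul_pos (mul_pos (mul_pos hk₄ (exp_pos _))
      (rpow_pos_of_pos (htR t ht.le) _)) (rpow_pos_of_pos (hF₁pos t ht.le) _)).trans_le (h4 t ht.le)
  have hF₂'₀ : 0 < deriv F₂ (T₃ + 1) := (h3' (T₃ + 1 / 2) (by linarith)).trans_lt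
    (hF₂'mono (mem_Ioi.2 (by linarith)) (mem_Ioi.2 (by linarith)) (by linarith))
  obtain ⟨T₁, hT₁, hlow⟩ := exists_le_mul_deriv_sq (by linarith) hk₂.le hα₂ (by linarith) hF₁
    (fun t ht => (hF₁pos t ht).le) h1' h2 hF₂ hF₂'mono.monotoneOn hF₂pos (by linarith) hF₂'₀
  have hF₂'pos : ∀ s, T₁ ≤ s → 0 < deriv F₂ s := fun s hs => hF₂'₀.trans_le
    (hF₂'mono.monotoneOn (mem_Ioi.2 (by linarith)) (mem_Ioi.2 (by linarith)) (hT₁.trans hs))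
  obtain ⟨T₂, hT₂⟩ := eventually_atTop.1
    (((tendsto_rpow_atTop (y := (p + 2) * q + 1) (by positivity)).comp
      (tendsto_atTop_of_mul_rpow_le hk₃ hβ₁ h3)).eventually_ge_atTop
        (2 * F₂ T₁ ^ ((p + 2) * q + 1)))
  refine ⟨max T₁ T₂, by linarith [le_max_left T₁ T₂], fun t ht => ?_⟩
  have ht₁ : T₁ ≤ t := le_of_max_le_left ht
  have henergy := le_deriv_rpow_of_le_mul_deriv_sq (by linarith) (by linarith) hα₂ hβ₂ hβ₃
    hk₄.le (by positivity) (by linarith) (by linarith) hF₂ (fun s hs => (hF₁pos s hs).le) hF₂pos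
    hF₂'pos h4 hlow ht₁
  have := htR t (by linarith)
  exact le_of_mul_exp_mul_rpow_le_rpow (by positivity) (by positivity) this.le
    (hF₂pos t (by linarith)).le (hF₂'pos t ht₁).le
    (const_mul_le_of_mul_sub_le (by linarith) (by linarith) hk₂.le hk₄.le (by positivity)
      (rpow_nonneg (hF₂pos T₁ (by linarith)).le _) (hT₂ t (le_of_max_le_right ht)) henergy)

/-- First-order differential inequality for F₂ for large times. -/
theorem stmt_3
    (p q α₁ α₂ β₁ β₂ β₃ k₀ k₂ k₃ k₄ R T₃ : ℝ)
    (hp : 1 < p) (hq : 1 < q)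
    (hα₂ : 0 ≤ α₂) (hβ₂ : 0 ≤ β₂) (hβ₃ : 0 ≤ β₃)
    (hα₁ : 0 < α₁) (hβ₁ : 0 < β₁)
    (hk₀ : 0 < k₀) (hk₂ : 0 < k₂) (hk₃ : 0 < k₃) (hk₄ : 0 < k₄)
    (hR : 0 < R) (hT₃ : 0 < T₃)
    (F₁ F₂ : ℝ → ℝ)
    (hF₁ : ContDiffOn ℝ 2 F₁ (Ici T₃)) (hF₂ : ContDiffOn ℝ 2 F₂ (Ici T₃))
    (h1 : ∀ t, T₃ ≤ t → k₀ * (t + R) ^ α₁ ≤ F₁ t)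
    (h1' : ∀ t, T₃ ≤ t → 0 ≤ deriv F₁ t)
    (h2 : ∀ t, T₃ ≤ t →
      k₂ * (t + R) ^ (-α₂) * (F₂ t) ^ p ≤ deriv (deriv F₁) t + deriv F₁ t)
    (h3 : ∀ t, T₃ ≤ t → k₃ * (t + R) ^ β₁ ≤ F₂ t)
    (h3' : ∀ t, T₃ ≤ t → 0 ≤ deriv F₂ t)
    (h4 : ∀ t, T₃ ≤ t →
      k₄ * Real.exp (-β₃ * t) * (t + R) ^ (-β₂) * (F₁ t) ^ q ≤ deriv (deriv F₂) t) :
    ∃ T₆, T₃ ≤ T₆ ∧ ∀ t, T₆ ≤ t →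
      ((2 * q + 1) * k₂ ^ q * k₄ / (2 * ((p + 2) * q + 1) * (4 * (p + 1) * (p + 2)) ^ q))
          ^ (1 / (2 * (q + 1))) *
        Real.exp (-((q + β₃) / (2 * (q + 1))) * t) *
        (t + R) ^ (-((β₂ + α₂ * q) / (2 * (q + 1)))) *
        (F₂ t) ^ (((p + 2) * q + 1) / (2 * (q + 1))) ≤ deriv F₂ t :=
  stmt_3_general p q α₁ α₂ β₁ β₂ β₃ k₀ k₂ k₃ k₄ R T₃ hp hq hα₂ hβ₂ hβ₃ hβ₁ hk₀ hk₂ hk₃ hk₄ hR hT₃ F₁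
    F₂ hF₁ hF₂ h1 h1' h2 h3 h3' h4
end

section
/- There exists T₈ ≥ T₃ such that for all t ≥ T₈ one has F₂(t) · (F₁'(t) + F₁(t))² ≥ (k₄/(4(q+1)(q+2))) e^{-β₃ t} (t+R)^{-β₂} F₁(t)^{q+2}. -/
/-!
Write `w t = k₄ e^{-β₃ t} (t+R)^{-β₂}`, a nonincreasing weight, and `H = F₁' + F₁`. If `P' ≥ w Φ'`
with `Φ` nondecreasing, then on `[a, t]` the function `P - w(t) Φ` is nondecreasing, so
`P(t) ≥ P(a) + w(t) (Φ(t) - Φ(a))`, which is at least `w(t) Φ(t) / 2` once `Φ(t) ≥ 2 Φ(a)`.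
This is applied twice. First to `P = F₂' H` and `Φ = F₁^{q+1}/(q+1)`: since `H' = F₁'' + F₁' ≥ 0`,
`P' ≥ F₂'' H ≥ w F₁^q F₁'`. Then to `P = F₂ H²` and `Φ = F₁^{q+2}/(2(q+1)(q+2))`: by the first
bound, `P' ≥ F₂' H · H ≥ w F₁^{q+1} F₁' / (2(q+1))`.
-/

open Real Set Filter

theorem mul_sub_le_sub_of_hasDerivAt {P Φ P' Φ' w : ℝ → ℝ} {a t : ℝ} (hat : a ≤ t)
    (hP : ∀ x ∈ Icc a t, HasDerivAt P (P' x) x) (hΦ : ∀ x ∈ Icc a t, HasDerivAt Φ (Φ' x) x)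
    (hw : ∀ x ∈ Icc a t, w t ≤ w x) (hΦ' : ∀ x ∈ Icc a t, 0 ≤ Φ' x)
    (hP' : ∀ x ∈ Icc a t, w x * Φ' x ≤ P' x) :
    w t * (Φ t - Φ a) ≤ P t - P a := by
  have hmono : MonotoneOn (fun x => P x - w t * Φ x) (Icc a t) := by
    refine monotoneOn_of_hasDerivWithinAt_nonneg (f' := fun x => P' x - w t * Φ' x)
      (convex_Icc a t) (fun x hx => ?_) (fun x hx => ?_) (fun x hx => ?_)
    · exact ((hP x hx).sub ((hΦ x hx).const_mul _)).continuousAt.continuousWithinAt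
    · rw [interior_Icc] at hx
      exact ((hP x (Ioo_subset_Icc_self hx)).sub
        ((hΦ x (Ioo_subset_Icc_self hx)).const_mul _)).hasDerivWithinAt
    · rw [interior_Icc] at hx
      have hx' := Ioo_subset_Icc_self hx
      nlinarith [hw x hx', hΦ' x hx', hP' x hx']
  have := hmono (left_mem_Icc.2 hat) (right_mem_Icc.2 hat) hat
  dsimp only at this
  linarith

theorem eventually_mul_div_two_le {P Φ P' Φ' w : ℝ → ℝ} {b : ℝ} (hw : AntitoneOn w (Ioi b))
    (hP : ∀ᶠ x in atTop, HasDerivAt P (P' x) x) (hΦ : ∀ᶠ x in atTop, HasDerivAt Φ (Φ' x) x)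
    (hw₀ : ∀ᶠ x in atTop, 0 ≤ w x) (hΦ' : ∀ᶠ x in atTop, 0 ≤ Φ' x)
    (hP' : ∀ᶠ x in atTop, w x * Φ' x ≤ P' x) (hP₀ : ∀ᶠ x in atTop, 0 ≤ P x)
    (hΦ_top : Tendsto Φ atTop atTop) :
    ∀ᶠ t in atTop, w t * Φ t / 2 ≤ P t := by
  obtain ⟨a, ha⟩ := ((eventually_gt_atTop b).and <| hP.and <| hΦ.and <| hw₀.and <| hΦ'.and <|
    hP'.and hP₀).exists_forall_of_atTop
  choose hb hPx hΦx hwx hΦ'x hP'x hP₀x using ha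
  filter_upwards [eventually_ge_atTop a, hΦ_top.eventually_ge_atTop (2 * Φ a)] with t hat hΦt
  have key : w t * (Φ t - Φ a) ≤ P t - P a :=
    mul_sub_le_sub_of_hasDerivAt hat (fun x hx => hPx x hx.1) (fun x hx => hΦx x hx.1)
      (fun x hx => hw (hb x hx.1) (hb t hat) hx.2) (fun x hx => hΦ'x x hx.1)
      (fun x hx => hP'x x hx.1)
  nlinarith [hP₀x a le_rfl, hwx t hat]

theorem antitoneOn_mul_exp_mul_rpow {c β γ R : ℝ} (hc : 0 ≤ c) (hβ : 0 ≤ β) (hγ : 0 ≤ γ) :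
    AntitoneOn (fun t => c * exp (-γ * t) * (t + R) ^ (-β)) (Ioi (-R)) := by
  intro x hx y hy hxy
  have hxR : 0 < x + R := by linarith [mem_Ioi.1 hx]
  have hyR : 0 < y + R := by linarith [mem_Ioi.1 hy]
  exact mul_le_mul (mul_le_mul_of_nonneg_left (exp_le_exp.2 (by nlinarith)) hc)
    (rpow_le_rpow_of_nonpos hxR (by linarith) (by linarith)) (by positivity) (by positivity)

theorem HasDerivAt.rpow_add_one_div {f : ℝ → ℝ} {f' x r : ℝ} (hf : HasDerivAt f f' x)
    (hx : 0 < f x) (hr : r + 1 ≠ 0) :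
    HasDerivAt (fun y => f y ^ (r + 1) / (r + 1)) (f' * f x ^ r) x := by
  refine ((hf.rpow_const (Or.inl hx.ne')).div_const (r + 1)).congr_deriv ?_
  rw [add_sub_cancel_right]
  field_simp

theorem ContDiffOn.eventually_differentiableAt_deriv {f : ℝ → ℝ} {a : ℝ}
    (hf : ContDiffOn ℝ 2 f (Ici a)) :
    ∀ᶠ x in atTop, DifferentiableAt ℝ f x ∧ DifferentiableAt ℝ (deriv f) x := by
  have hf' := hf.mono Ioi_subset_Ici_self
  filter_upwards [eventually_gt_atTop a] with x hx
  have hf'' : ContDiffOn ℝ 1 (deriv f) (Ioi a) := hf'.deriv_of_isOpen isOpen_Ioi (by norm_num)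
  exact ⟨(hf'.differentiableOn (by norm_num)).differentiableAt (Ioi_mem_nhds hx),
    (hf''.differentiableOn one_ne_zero).differentiableAt (Ioi_mem_nhds hx)⟩

theorem eventually_mul_rpow_div_le_deriv_mul {F₁ F₂ w : ℝ → ℝ} {q b : ℝ} (hq : 0 < q + 1)
    (hw : AntitoneOn w (Ioi b)) (hw₀ : ∀ᶠ x in atTop, 0 ≤ w x)
    (hF₁ : ∀ᶠ x in atTop, DifferentiableAt ℝ F₁ x ∧ DifferentiableAt ℝ (deriv F₁) x)
    (hF₂ : ∀ᶠ x in atTop, DifferentiableAt ℝ (deriv F₂) x)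
    (hF₁₀ : ∀ᶠ x in atTop, 0 < F₁ x) (hF₁' : ∀ᶠ x in atTop, 0 ≤ deriv F₁ x)
    (hH' : ∀ᶠ x in atTop, 0 ≤ deriv (deriv F₁) x + deriv F₁ x)
    (hF₂' : ∀ᶠ x in atTop, 0 ≤ deriv F₂ x)
    (hF₂'' : ∀ᶠ x in atTop, w x * F₁ x ^ q ≤ deriv (deriv F₂) x)
    (hF₁_top : Tendsto F₁ atTop atTop) :
    ∀ᶠ t in atTop, w t * (F₁ t ^ (q + 1) / (q + 1)) / 2 ≤ deriv F₂ t * (deriv F₁ t + F₁ t) := by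
  refine eventually_mul_div_two_le hw (Φ' := fun x => deriv F₁ x * F₁ x ^ q)
    (P' := fun x => deriv (deriv F₂) x * (deriv F₁ x + F₁ x) +
      deriv F₂ x * (deriv (deriv F₁) x + deriv F₁ x)) ?_ ?_ hw₀ ?_ ?_ ?_
    (((tendsto_rpow_atTop hq).comp hF₁_top).atTop_div_const hq)
  · filter_upwards [hF₁, hF₂] with x h₁ h₂
    exact h₂.hasDerivAt.mul (h₁.2.hasDerivAt.add h₁.1.hasDerivAt)
  · filter_upwards [hF₁, hF₁₀] with x h₁ h₀
    exact h₁.1.hasDerivAt.rpow_add_one_div h₀ hq.ne'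
  · filter_upwards [hF₁', hF₁₀] with x h₁ h₀
    positivity
  · filter_upwards [hw₀, hF₁₀, hF₁', hH', hF₂', hF₂''] with x hw hF₁₀ hF₁' hH' hF₂' hF₂''
    have hwF : 0 ≤ w x * F₁ x ^ q := by positivity
    have : w x * F₁ x ^ q * (deriv F₁ x + F₁ x) ≤ deriv (deriv F₂) x * (deriv F₁ x + F₁ x) :=
      mul_le_mul_of_nonneg_right hF₂'' (by positivity)
    nlinarith [mul_nonneg hF₂' hH', mul_nonneg hwF hF₁₀.le]
  · filter_upwards [hF₂', hF₁', hF₁₀] with x h₂ h₁ h₀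
    positivity

theorem eventually_mul_rpow_div_le_mul_sq {F₁ F₂ w : ℝ → ℝ} {q b : ℝ} (hq : 0 < q + 1)
    (hw : AntitoneOn w (Ioi b)) (hw₀ : ∀ᶠ x in atTop, 0 ≤ w x)
    (hF₁ : ∀ᶠ x in atTop, DifferentiableAt ℝ F₁ x ∧ DifferentiableAt ℝ (deriv F₁) x)
    (hF₂ : ∀ᶠ x in atTop, DifferentiableAt ℝ F₂ x)
    (hF₁₀ : ∀ᶠ x in atTop, 0 < F₁ x) (hF₁' : ∀ᶠ x in atTop, 0 ≤ deriv F₁ x)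
    (hH' : ∀ᶠ x in atTop, 0 ≤ deriv (deriv F₁) x + deriv F₁ x)
    (hF₂₀ : ∀ᶠ x in atTop, 0 ≤ F₂ x)
    (hF₂' : ∀ᶠ x in atTop,
      w x * (F₁ x ^ (q + 1) / (q + 1)) / 2 ≤ deriv F₂ x * (deriv F₁ x + F₁ x))
    (hF₁_top : Tendsto F₁ atTop atTop) :
    ∀ᶠ t in atTop,
      w t * (F₁ t ^ (q + 2) / (q + 2) / (2 * (q + 1))) / 2 ≤ F₂ t * (deriv F₁ t + F₁ t) ^ 2 := by
  have hq₂ : 0 < q + 1 + 1 := by linarith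
  rw [show q + 2 = q + 1 + 1 by ring]
  refine eventually_mul_div_two_le hw
    (Φ' := fun x => deriv F₁ x * F₁ x ^ (q + 1) / (2 * (q + 1)))
    (P' := fun x => deriv F₂ x * (deriv F₁ x + F₁ x) ^ 2 +
      F₂ x * (2 * (deriv F₁ x + F₁ x) * (deriv (deriv F₁) x + deriv F₁ x))) ?_ ?_ hw₀ ?_ ?_ ?_
    ((((tendsto_rpow_atTop hq₂).comp hF₁_top).atTop_div_const hq₂).atTop_div_const (by positivity))
  · filter_upwards [hF₁, hF₂] with x h₁ h₂
    exact (h₂.hasDerivAt.mul ((h₁.2.hasDerivAt.add h₁.1.hasDerivAt).pow 2)).congr_deriv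
      (by simp only [Pi.add_apply, Pi.pow_apply]; push_cast; ring)
  · filter_upwards [hF₁, hF₁₀] with x h₁ h₀
    exact (h₁.1.hasDerivAt.rpow_add_one_div h₀ hq₂.ne').div_const _
  · filter_upwards [hF₁', hF₁₀] with x h₁ h₀
    positivity
  · filter_upwards [hw₀, hF₁₀, hF₁', hH', hF₂₀, hF₂'] with x hw hF₁₀ hF₁' hH' hF₂₀ hF₂'
    have hX : w x * (deriv F₁ x * F₁ x ^ (q + 1) / (2 * (q + 1))) =
        w x * (F₁ x ^ (q + 1) / (q + 1)) / 2 * deriv F₁ x := by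
      field_simp
    have hH : 0 ≤ deriv F₁ x + F₁ x := by positivity
    rw [hX]
    nlinarith [mul_le_mul_of_nonneg_right hF₂' hH, mul_nonneg (mul_nonneg hF₂₀ hH) hH',
      show 0 ≤ w x * (F₁ x ^ (q + 1) / (q + 1)) / 2 by positivity]
  · filter_upwards [hF₂₀] with x h
    positivity

theorem stmt_6_general
    (p q α₁ α₂ β₁ β₂ β₃ k₀ k₂ k₃ k₄ R T₃ : ℝ)
    (hq : 1 < q)
    (hβ₂ : 0 ≤ β₂) (hβ₃ : 0 ≤ β₃)
    (hα₁ : 0 < α₁)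
    (hk₀ : 0 < k₀) (hk₂ : 0 < k₂) (hk₃ : 0 < k₃) (hk₄ : 0 < k₄)
    (F₁ F₂ : ℝ → ℝ)
    (hF₁ : ContDiffOn ℝ 2 F₁ (Ici T₃)) (hF₂ : ContDiffOn ℝ 2 F₂ (Ici T₃))
    (h1 : ∀ t, T₃ ≤ t → k₀ * (t + R) ^ α₁ ≤ F₁ t)
    (h1' : ∀ t, T₃ ≤ t → 0 ≤ deriv F₁ t)
    (h2 : ∀ t, T₃ ≤ t →
      k₂ * (t + R) ^ (-α₂) * (F₂ t) ^ p ≤ deriv (deriv F₁) t + deriv F₁ t)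
    (h3 : ∀ t, T₃ ≤ t → k₃ * (t + R) ^ β₁ ≤ F₂ t)
    (h3' : ∀ t, T₃ ≤ t → 0 ≤ deriv F₂ t)
    (h4 : ∀ t, T₃ ≤ t →
      k₄ * Real.exp (-β₃ * t) * (t + R) ^ (-β₂) * (F₁ t) ^ q ≤ deriv (deriv F₂) t) :
    ∃ T₈, T₃ ≤ T₈ ∧ ∀ t, T₈ ≤ t →
      k₄ / (4 * (q + 1) * (q + 2)) * Real.exp (-β₃ * t) * (t + R) ^ (-β₂) * (F₁ t) ^ (q + 2) ≤
        F₂ t * (deriv F₁ t + F₁ t) ^ (2 : ℕ) := by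
  set w : ℝ → ℝ := fun t => k₄ * exp (-β₃ * t) * (t + R) ^ (-β₂)
  have hw := antitoneOn_mul_exp_mul_rpow (R := R) hk₄.le hβ₂ hβ₃
  have hT : ∀ᶠ t in atTop, T₃ ≤ t ∧ 0 < t + R :=
    (eventually_ge_atTop T₃).and ((eventually_gt_atTop (-R)).mono fun t ht => by linarith)
  have hw₀ : ∀ᶠ t in atTop, 0 ≤ w t := hT.mono fun t ⟨_, htR⟩ => by positivity
  have hF₁₀ : ∀ᶠ t in atTop, 0 < F₁ t :=
    hT.mono fun t ⟨ht, htR⟩ => (by positivity : 0 < k₀ * (t + R) ^ α₁).trans_le (h1 t ht)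
  have hF₂₀ : ∀ᶠ t in atTop, 0 < F₂ t :=
    hT.mono fun t ⟨ht, htR⟩ => (by positivity : 0 < k₃ * (t + R) ^ β₁).trans_le (h3 t ht)
  have hH' : ∀ᶠ t in atTop, 0 ≤ deriv (deriv F₁) t + deriv F₁ t := by
    filter_upwards [hT, hF₂₀] with t ⟨ht, htR⟩ hF₂t
    exact le_trans (by positivity) (h2 t ht)
  have hF₁_top : Tendsto F₁ atTop atTop :=
    tendsto_atTop_mono' _ ((eventually_ge_atTop T₃).mono h1)
      (((tendsto_rpow_atTop hα₁).comp
        (tendsto_atTop_add_const_right _ R tendsto_id)).const_mul_atTop hk₀)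
  have hd₁ := hF₁.eventually_differentiableAt_deriv
  have hd₂ := hF₂.eventually_differentiableAt_deriv
  have h_first := eventually_mul_rpow_div_le_deriv_mul (by linarith) hw hw₀ hd₁
    (hd₂.mono fun _ => And.right) hF₁₀ ((eventually_ge_atTop T₃).mono h1') hH'
    ((eventually_ge_atTop T₃).mono h3') ((eventually_ge_atTop T₃).mono h4) hF₁_top
  obtain ⟨N, hN⟩ := (eventually_mul_rpow_div_le_mul_sq (by linarith) hw hw₀ hd₁
    (hd₂.mono fun _ => And.left) hF₁₀ ((eventually_ge_atTop T₃).mono h1') hH'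
    (hF₂₀.mono fun _ => le_of_lt) h_first hF₁_top).exists_forall_of_atTop
  refine ⟨max T₃ N, le_max_left _ _, fun t ht => le_of_eq_of_le ?_ (hN t (le_of_max_le_right ht))⟩
  field_simp
  ring

/-- Lower bound for F₂·(F₁' + F₁)² for large times. -/
theorem stmt_6
    (p q α₁ α₂ β₁ β₂ β₃ k₀ k₂ k₃ k₄ R T₃ : ℝ)
    (hp : 1 < p) (hq : 1 < q)
    (hα₂ : 0 ≤ α₂) (hβ₂ : 0 ≤ β₂) (hβ₃ : 0 ≤ β₃)
    (hα₁ : 0 < α₁) (hβ₁ : 0 < β₁)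
    (hk₀ : 0 < k₀) (hk₂ : 0 < k₂) (hk₃ : 0 < k₃) (hk₄ : 0 < k₄)
    (hR : 0 < R) (hT₃ : 0 < T₃)
    (F₁ F₂ : ℝ → ℝ)
    (hF₁ : ContDiffOn ℝ 2 F₁ (Ici T₃)) (hF₂ : ContDiffOn ℝ 2 F₂ (Ici T₃))
    (h1 : ∀ t, T₃ ≤ t → k₀ * (t + R) ^ α₁ ≤ F₁ t)
    (h1' : ∀ t, T₃ ≤ t → 0 ≤ deriv F₁ t)
    (h2 : ∀ t, T₃ ≤ t →
      k₂ * (t + R) ^ (-α₂) * (F₂ t) ^ p ≤ deriv (deriv F₁) t + deriv F₁ t)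
    (h3 : ∀ t, T₃ ≤ t → k₃ * (t + R) ^ β₁ ≤ F₂ t)
    (h3' : ∀ t, T₃ ≤ t → 0 ≤ deriv F₂ t)
    (h4 : ∀ t, T₃ ≤ t →
      k₄ * Real.exp (-β₃ * t) * (t + R) ^ (-β₂) * (F₁ t) ^ q ≤ deriv (deriv F₂) t) :
    ∃ T₈, T₃ ≤ T₈ ∧ ∀ t, T₈ ≤ t →
      k₄ / (4 * (q + 1) * (q + 2)) * Real.exp (-β₃ * t) * (t + R) ^ (-β₂) * (F₁ t) ^ (q + 2) ≤
        F₂ t * (deriv F₁ t + F₁ t) ^ (2 : ℕ) :=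
  stmt_6_general p q α₁ α₂ β₁ β₂ β₃ k₀ k₂ k₃ k₄ R T₃ hq hβ₂ hβ₃ hα₁ hk₀ hk₂ hk₃ hk₄ F₁ F₂ hF₁ hF₂ h1
    h1' h2 h3 h3' h4
end

section
/- Let κ > 0, γ ≥ 0, β > 1, α ∈ ℝ, R > 0 and T₉ ≥ 0 with T' > T₉. If Z : [T₉, T'] → ℝ is continuously differentiable, Z(t) > 0 for all t ∈ [T₉, T'], and Z'(t) + Z(t) ≥ κ e^{-γ t}(t+R)^{-α} Z(t)^β for all t ∈ [T₉, T'], then necessarily (e^{T₉} Z(T₉))^{1-β} > κ(β−1) ∫_{T₉}^{T'} e^{-(β+γ−1)τ}(τ+R)^{-α} dτ. Equivalently, no such positive C¹ supersolution exists on [T₉, T'] once (e^{T₉} Z(T₉))^{1-β} ≤ κ(β−1) ∫_{T₉}^{T'} e^{-(β+γ−1)τ}(τ+R)^{-α} dτ. -/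
/-!
With `W = eᵗ Z` the inequality becomes the Bernoulli-type inequality `W' ≥ g W^β`, where
`g t = κ e^{-(β+γ-1)t} (t+R)^{-α}`. Hence `(W^{1-β})' = (1-β) W^{-β} W' ≤ -(β-1) g`, and
integrating over `[T₉, T']` gives `(β-1) ∫ g ≤ W(T₉)^{1-β} - W(T')^{1-β} < W(T₉)^{1-β}`.
-/

open Real Set intervalIntegral

theorem sub_one_mul_integral_le_rpow_one_sub_sub {W W' g : ℝ → ℝ} {a b β : ℝ}
    (hab : a ≤ b) (hβ : 1 ≤ β) (hW : ContinuousOn W (Icc a b)) (hWpos : ∀ t ∈ Icc a b, 0 < W t)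
    (hderiv : ∀ t ∈ Ioo a b, HasDerivAt W (W' t) t) (hg : MeasureTheory.IntegrableOn g (Icc a b))
    (hineq : ∀ t ∈ Ioo a b, g t * W t ^ β ≤ W' t) :
    (β - 1) * ∫ t in a..b, g t ≤ W a ^ (1 - β) - W b ^ (1 - β) := by
  rw [← integral_const_mul]
  have key := integral_le_sub_of_hasDeriv_right_of_le (g := fun t => -W t ^ (1 - β))
    (φ := fun t => (β - 1) * g t) hab
    ((hW.rpow_const fun t ht => Or.inl (hWpos t ht).ne').neg)
    (fun t ht => (((hderiv t ht).rpow_const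
      (Or.inl (hWpos t (Ioo_subset_Icc_self ht)).ne')).neg).hasDerivWithinAt)
    (hg.const_mul _) fun t ht => ?_
  · linarith
  have hpos := hWpos t (Ioo_subset_Icc_self ht)
  have hcancel : W t ^ (1 - β - 1) * W t ^ β = 1 := by
    rw [← rpow_add hpos]; norm_num
  calc (β - 1) * g t = (β - 1) * W t ^ (1 - β - 1) * (g t * W t ^ β) := by
        linear_combination (-(β - 1) * g t) * hcancel
    _ ≤ (β - 1) * W t ^ (1 - β - 1) * W' t :=
        mul_le_mul_of_nonneg_left (hineq t ht)
          (mul_nonneg (sub_nonneg.2 hβ) (rpow_pos_of_pos hpos _).le)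
    _ = -(W' t * (1 - β) * W t ^ (1 - β - 1)) := by ring

theorem mul_exp_mul_rpow_le_of_rpow_le {c z z' t β : ℝ} (hz : 0 < z)
    (h : c * z ^ β ≤ z' + z) :
    c * exp (-(β - 1) * t) * (exp t * z) ^ β ≤ exp t * z + exp t * z' := by
  have hexp : exp (-(β - 1) * t) * exp (t * β) = exp t := by rw [← exp_add]; ring_nf
  calc c * exp (-(β - 1) * t) * (exp t * z) ^ β
      = c * z ^ β * (exp (-(β - 1) * t) * exp (t * β)) := by
        rw [mul_rpow (exp_pos t).le hz.le, ← exp_mul]; ring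
    _ = exp t * (c * z ^ β) := by rw [hexp]; ring
    _ ≤ exp t * (z' + z) := mul_le_mul_of_nonneg_left h (exp_pos t).le
    _ = exp t * z + exp t * z' := by ring

theorem stmt_9_general
    (κ γ β α R T₉ T' : ℝ)
    (hβ : 1 < β) (hR : 0 < R)
    (hT₉ : 0 ≤ T₉) (hT' : T₉ < T')
    (Z : ℝ → ℝ)
    (hZ : ContDiffOn ℝ 1 Z (Icc T₉ T'))
    (hpos : ∀ t ∈ Icc T₉ T', 0 < Z t)
    (hineq : ∀ t ∈ Icc T₉ T',
      κ * Real.exp (-γ * t) * (t + R) ^ (-α) * (Z t) ^ β ≤ deriv Z t + Z t) :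
    κ * (β - 1) * (∫ τ in T₉..T', Real.exp (-(β + γ - 1) * τ) * (τ + R) ^ (-α)) <
      (Real.exp T₉ * Z T₉) ^ (1 - β) := by
  have hWpos : ∀ t ∈ Icc T₉ T', 0 < exp t * Z t := fun t ht => mul_pos (exp_pos t) (hpos t ht)
  have hWderiv : ∀ t ∈ Ioo T₉ T',
      HasDerivAt (fun s => exp s * Z s) (exp t * Z t + exp t * deriv Z t) t := fun t ht =>
    (hasDerivAt_exp t).mul
      ((hZ.differentiableOn one_ne_zero).differentiableAt (Icc_mem_nhds ht.1 ht.2)).hasDerivAt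
  have hWsuper : ∀ t ∈ Ioo T₉ T', κ * (exp (-(β + γ - 1) * t) * (t + R) ^ (-α)) *
      (exp t * Z t) ^ β ≤ exp t * Z t + exp t * deriv Z t := by
    intro t ht
    have ht' := Ioo_subset_Icc_self ht
    convert mul_exp_mul_rpow_le_of_rpow_le (t := t) (hpos t ht') (hineq t ht') using 2
    rw [show -(β + γ - 1) * t = -γ * t + -(β - 1) * t by ring, exp_add]
    ring
  have hweight : ContinuousOn (fun τ => κ * (exp (-(β + γ - 1) * τ) * (τ + R) ^ (-α)))
      (Icc T₉ T') := by
    refine continuousOn_const.mul (Continuous.continuousOn (by fun_prop) |>.mul ?_)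
    exact (continuousOn_id.add continuousOn_const).rpow_const
      fun t ht => Or.inl (add_pos_of_nonneg_of_pos (hT₉.trans ht.1) hR).ne'
  have hbound := sub_one_mul_integral_le_rpow_one_sub_sub (W := fun t => exp t * Z t) hT'.le hβ.le
    (continuous_exp.continuousOn.mul hZ.continuousOn) hWpos hWderiv hweight.integrableOn_Icc hWsuper
  rw [integral_const_mul] at hbound
  have hWT' := rpow_pos_of_pos (hWpos T' (right_mem_Icc.2 hT'.le)) (1 - β)
  linarith

/-- Blow-up mechanism: a positive `C¹` supersolution of
`Z' + Z ≥ κ e^{-γt}(t+R)^{-α} Z^β` on `[T₉, T']` forces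
`(e^{T₉} Z(T₉))^{1-β} > κ(β-1)∫_{T₉}^{T'} e^{-(β+γ-1)τ}(τ+R)^{-α} dτ`. -/
theorem stmt_9
    (κ γ β α R T₉ T' : ℝ)
    (hκ : 0 < κ) (hγ : 0 ≤ γ) (hβ : 1 < β) (hR : 0 < R)
    (hT₉ : 0 ≤ T₉) (hT' : T₉ < T')
    (Z : ℝ → ℝ)
    (hZ : ContDiffOn ℝ 1 Z (Icc T₉ T'))
    (hpos : ∀ t ∈ Icc T₉ T', 0 < Z t)
    (hineq : ∀ t ∈ Icc T₉ T',
      κ * Real.exp (-γ * t) * (t + R) ^ (-α) * (Z t) ^ β ≤ deriv Z t + Z t) :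
    κ * (β - 1) * (∫ τ in T₉..T', Real.exp (-(β + γ - 1) * τ) * (τ + R) ^ (-α)) <
      (Real.exp T₉ * Z T₉) ^ (1 - β) :=
  stmt_9_general κ γ β α R T₉ T' hβ hR hT₉ hT' Z hZ hpos hineq
end

section
/- Let γ > 0, R > 0 and t₀ ≥ 0. Then there exists t₁ > t₀ such that for all t ≥ t₁: e^{-t} ∫_{t₀}^{t} e^{τ}(τ+R)^{γ} dτ ≥ (1/4)(t+R)^{γ}. -/
/-!
The weight `exp (τ - t)` is at least `exp (-1)` on the last unit interval `[t - 1, t]`, so by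
monotonicity of the integrand the left side is at least `exp (-1) * (t - 1 + R) ^ γ`. Since
`((t - 1 + R) / (t + R)) ^ γ → 1` and `exp (-1) > 1 / 4`, this dominates `(t + R) ^ γ / 4` for
large `t`.
-/

open Real Set intervalIntegral Filter Topology

theorem mul_exp_neg_mul_le_exp_neg_mul_integral {f : ℝ → ℝ} {a t δ : ℝ} (hδ : 0 ≤ δ)
    (hat : a ≤ t - δ) (hf : MonotoneOn f (Icc a t)) (hf0 : ∀ τ ∈ Icc a t, 0 ≤ f τ) :
    δ * exp (-δ) * f (t - δ) ≤ exp (-t) * ∫ τ in a..t, exp τ * f τ := by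
  have hint : ∀ b c, a ≤ b → b ≤ c → c ≤ t →
      IntervalIntegrable (fun τ => exp τ * f τ) MeasureTheory.volume b c :=
    fun b c hab hbc hct =>
    have hfbc : MonotoneOn f (uIcc b c) := hf.mono (uIcc_of_le hbc ▸ Icc_subset_Icc hab hct)
    hfbc.intervalIntegrable.continuousOn_mul continuous_exp.continuousOn
  have hhead : 0 ≤ ∫ τ in a..t - δ, exp τ * f τ :=
    integral_nonneg hat fun τ hτ =>
      mul_nonneg (exp_pos τ).le (hf0 τ ⟨hτ.1, by linarith [hτ.2]⟩)
  have htail : δ * (exp (t - δ) * f (t - δ)) ≤ ∫ τ in t - δ..t, exp τ * f τ := by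
    have hmem : t - δ ∈ Icc a t := ⟨hat, by linarith⟩
    calc δ * (exp (t - δ) * f (t - δ)) = ∫ _ in t - δ..t, exp (t - δ) * f (t - δ) := by
          rw [integral_const, smul_eq_mul, sub_sub_cancel]
      _ ≤ ∫ τ in t - δ..t, exp τ * f τ :=
        integral_mono_on (by linarith) intervalIntegrable_const (hint _ _ hat (by linarith) le_rfl)
          fun τ hτ => mul_le_mul (exp_le_exp.2 hτ.1)
            (hf hmem ⟨hat.trans hτ.1, hτ.2⟩ hτ.1) (hf0 _ hmem) (exp_pos τ).le
  rw [← integral_add_adjacent_intervals (hint _ _ le_rfl hat (by linarith))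
    (hint _ _ hat (by linarith) le_rfl)]
  calc δ * exp (-δ) * f (t - δ) = exp (-t) * (δ * (exp (t - δ) * f (t - δ))) := by
        rw [show exp (-δ) = exp (-t) * exp (t - δ) by rw [← exp_add]; ring_nf]; ring
    _ ≤ _ := by gcongr; linarith

theorem tendsto_add_div_add_atTop (a b : ℝ) :
    Tendsto (fun x : ℝ => (x + b) / (x + a)) atTop (𝓝 1) := by
  have hinv : Tendsto (fun x : ℝ => (x + a)⁻¹) atTop (𝓝 0) :=
    tendsto_inv_atTop_zero.comp (tendsto_atTop_add_const_right _ a tendsto_id)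
  have hlim := (hinv.const_mul (b - a)).const_add 1
  rw [mul_zero, add_zero] at hlim
  refine hlim.congr' ?_
  filter_upwards [eventually_gt_atTop (-a)] with x hx
  have : x + a ≠ 0 := by linarith
  field_simp
  ring

theorem eventually_mul_rpow_add_le_rpow_add {c : ℝ} (hc : c < 1) (a b γ : ℝ) :
    ∀ᶠ x in atTop, c * (x + a) ^ γ ≤ (x + b) ^ γ := by
  have hratio : Tendsto (fun x : ℝ => ((x + b) / (x + a)) ^ γ) atTop (𝓝 1) := by
    simpa using (tendsto_add_div_add_atTop a b).rpow_const (Or.inl one_ne_zero)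
  filter_upwards [hratio.eventually_const_lt hc, eventually_gt_atTop (-a),
    eventually_gt_atTop (-b)] with x hlt ha hb
  calc c * (x + a) ^ γ ≤ ((x + b) / (x + a)) ^ γ * (x + a) ^ γ :=
        mul_le_mul_of_nonneg_right hlt.le (rpow_nonneg (by linarith) _)
    _ = (x + b) ^ γ := by
        rw [div_rpow (by linarith) (by linarith),
          div_mul_cancel₀ _ (rpow_pos_of_pos (by linarith) _).ne']

/-- Lower bound for an exponentially weighted integral of a power function. -/
theorem stmt_13
    (γ R t₀ : ℝ) (hγ : 0 < γ) (hR : 0 < R) (ht₀ : 0 ≤ t₀) :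
    ∃ t₁, t₀ < t₁ ∧ ∀ t, t₁ ≤ t →
      (1 / 4) * (t + R) ^ γ ≤
        Real.exp (-t) * ∫ τ in t₀..t, Real.exp τ * (τ + R) ^ γ := by
  have he : exp 1 / 4 < 1 := by linarith [exp_one_lt_d9]
  obtain ⟨t₁, ht₁⟩ :=
    eventually_atTop.1 (eventually_mul_rpow_add_le_rpow_add he R (R - 1) γ)
  refine ⟨max t₁ (t₀ + 1), by linarith [le_max_right t₁ (t₀ + 1)], fun t ht => ?_⟩
  have hshift : t₀ ≤ t - 1 := by linarith [le_max_right t₁ (t₀ + 1)]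
  have hmono : MonotoneOn (fun τ => (τ + R) ^ γ) (Icc t₀ t) := fun x hx y _ hxy =>
    rpow_le_rpow (by linarith [hx.1]) (by linarith) hγ.le
  have hlower := mul_exp_neg_mul_le_exp_neg_mul_integral zero_le_one hshift hmono
    fun τ hτ => rpow_nonneg (by linarith [hτ.1]) γ
  calc 1 / 4 * (t + R) ^ γ = exp (-1) * (exp 1 / 4 * (t + R) ^ γ) := by
        rw [exp_neg]; field_simp
    _ ≤ exp (-1) * (t - 1 + R) ^ γ := by
        rw [show t - 1 + R = t + (R - 1) by ring]
        gcongr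
        exact ht₁ t (le_of_max_le_left ht)
    _ ≤ _ := by simpa using hlower
end

section
/- Let c > 0, R > 0 and σ > −1. Let H : [0, ∞) → ℝ be twice continuously differentiable with H(0) ≥ 0, H'(0) + H(0) ≥ 0, and H''(t) + H'(t) ≥ c(t+R)^{σ} for all t ≥ 0. Then there exists T > 0 such that for all t ≥ T: H(t) ≥ (c/(8(σ+1))) (t+R)^{σ+1}. -/
/-!
Write `P = H' + H`. The hypothesis says `P' ≥ c (t+R)^σ`, so `P` grows at least like
`c/(σ+1) · (t+R)^(σ+1)`. Since `(eᵗ H)' = eᵗ P`, the function `H` is dragged towards `P`: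
comparing on `[t-1, t]` gives `H t ≥ (1 - e⁻¹) · min_{[t-1,t]} P + e⁻¹ H (t-1)`, and the same
comparison on `[1, t]` shows that `H` is bounded below. As `(t-1+R)^(σ+1) ~ (t+R)^(σ+1)` and
`1 - e⁻¹ > 1/2`, this yields the bound, with room to spare in the constant.
-/

open Real Set Filter Topology

theorem Convex.monotoneOn_of_hasDerivAt_nonneg {s : Set ℝ} {f f' : ℝ → ℝ} (hs : Convex ℝ s)
    (hf : ∀ x ∈ s, HasDerivAt f (f' x) x) (hf' : ∀ x ∈ s, 0 ≤ f' x) : MonotoneOn f s :=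
  monotoneOn_of_hasDerivWithinAt_nonneg hs
    (fun x hx => (hf x hx).continuousAt.continuousWithinAt)
    (fun x hx => (hf x (interior_subset hx)).hasDerivWithinAt)
    fun x hx => hf' x (interior_subset hx)

theorem ContDiffOn.hasDerivAt_deriv {f : ℝ → ℝ} {s : Set ℝ} {x : ℝ} {n : WithTop ℕ∞}
    (hf : ContDiffOn ℝ n f s) (hn : n ≠ 0) (hx : s ∈ 𝓝 x) : HasDerivAt f (deriv f x) x :=
  ((hf.contDiffAt hx).differentiableAt hn).hasDerivAt

theorem ContDiffOn.hasDerivAt_deriv_deriv {f : ℝ → ℝ} {s : Set ℝ} {x : ℝ} {n : WithTop ℕ∞}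
    (hf : ContDiffOn ℝ n f s) (hn : 2 ≤ n) (hx : s ∈ 𝓝 x) :
    HasDerivAt (deriv f) (deriv (deriv f) x) x := by
  have hderiv : ContDiffOn ℝ 1 (deriv f) (interior s) :=
    (hf.mono interior_subset).deriv_of_isOpen isOpen_interior (one_add_one_eq_two.trans_le hn)
  have hxs : x ∈ interior s := mem_interior_iff_mem_nhds.2 hx
  exact ((hderiv.differentiableOn one_ne_zero x hxs).differentiableAt
    (isOpen_interior.mem_nhds hxs)).hasDerivAt

theorem monotoneOn_sub_mul_rpow_of_le_deriv {P P' : ℝ → ℝ} {a c R σ : ℝ} (hσ : -1 < σ)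
    (haR : 0 < a + R) (hP : ∀ x ∈ Ici a, HasDerivAt P (P' x) x)
    (hP' : ∀ x ∈ Ici a, c * (x + R) ^ σ ≤ P' x) :
    MonotoneOn (fun t => P t - c / (σ + 1) * (t + R) ^ (σ + 1)) (Ici a) := by
  refine (convex_Ici a).monotoneOn_of_hasDerivAt_nonneg (f' := fun x => P' x - c * (x + R) ^ σ)
    (fun x hx => ?_) fun x hx => sub_nonneg.2 (hP' x hx)
  have hxR : x + R ≠ 0 := by linarith [hx.out]
  have hpow := (((hasDerivAt_id x).add_const R).rpow_const (p := σ + 1) (Or.inl hxR)).const_mul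
    (c / (σ + 1))
  have hcoeff : c / (σ + 1) * (1 * (σ + 1) * (id x + R) ^ (σ + 1 - 1)) = c * (x + R) ^ σ := by
    field_simp [show σ + 1 ≠ 0 by linarith]
    simp
  rw [hcoeff] at hpow
  exact (hP x hx).sub hpow

theorem add_sub_mul_exp_le_of_le_deriv_add {H H' : ℝ → ℝ} {m u v : ℝ} (huv : u ≤ v)
    (hH : ∀ x ∈ Icc u v, HasDerivAt H (H' x) x) (hm : ∀ x ∈ Icc u v, m ≤ H' x + H x) :
    m + (H u - m) * exp (u - v) ≤ H v := by
  have hmono : MonotoneOn (fun x => exp x * (H x - m)) (Icc u v) :=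
    (convex_Icc u v).monotoneOn_of_hasDerivAt_nonneg
      (fun x hx => (hasDerivAt_exp x).mul ((hH x hx).sub_const m))
      fun x hx => by nlinarith [hm x hx, exp_pos x]
  have hweighted := hmono (left_mem_Icc.2 huv) (right_mem_Icc.2 huv) huv
  have : (H u - m) * exp (u - v) ≤ H v - m := by
    rw [exp_sub, mul_div_assoc', div_le_iff₀ (exp_pos v)]
    linarith
  linarith

theorem exists_half_mul_rpow_sub_le_of_le_deriv_add {H H' : ℝ → ℝ} {a b p R A : ℝ}
    (hb : 0 ≤ b) (hp : 0 ≤ p) (haR : 0 ≤ a + R) (hH : ∀ x ∈ Ici a, HasDerivAt H (H' x) x)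
    (hP : ∀ x ∈ Ici a, A + b * (x + R) ^ p ≤ H' x + H x) :
    ∃ K, ∀ t, a + 1 ≤ t → b / 2 * (t - 1 + R) ^ p - K ≤ H t := by
  set K₀ := |A| + |H a - A|
  have hlower : ∀ s, a ≤ s → -K₀ ≤ H s := by
    intro s hs
    have h := add_sub_mul_exp_le_of_le_deriv_add (m := A) hs (fun x hx => hH x hx.1) fun x hx =>
      (le_add_of_nonneg_right (mul_nonneg hb (rpow_nonneg (by linarith [hx.1]) p))).trans
        (hP x hx.1)
    have he : exp (a - s) ≤ 1 := exp_le_one_iff.2 (by linarith)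
    nlinarith [neg_abs_le A, neg_abs_le (H a - A), abs_nonneg (H a - A), exp_pos (a - s)]
  refine ⟨|A| + K₀, fun t ht => ?_⟩
  set X := (t - 1 + R) ^ p
  have hX : 0 ≤ X := rpow_nonneg (by linarith) p
  have hsub : Icc (t - 1) t ⊆ Ici a := fun x hx => mem_Ici.2 (by linarith [hx.1])
  have h := add_sub_mul_exp_le_of_le_deriv_add (m := A + b * X) (sub_le_self t zero_le_one)
    (fun x hx => hH x (hsub hx)) fun x hx =>
      (add_le_add_right (mul_le_mul_of_nonneg_left
        (rpow_le_rpow (by linarith) (by linarith [hx.1]) hp) hb) A).trans (hP x (hsub hx))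
  -- `e⁻¹ ≤ 1/2`, so at least half of the forcing `b X` on `[t - 1, t]` reaches `H t`
  have he : exp (t - 1 - t) ≤ 1 / 2 := by
    rw [show t - 1 - t = -1 by ring, exp_neg, inv_le_comm₀ (exp_pos 1) (by norm_num)]
    linarith [exp_one_gt_two]
  nlinarith [hlower (t - 1) (by linarith), neg_abs_le A, abs_nonneg A, abs_nonneg (H a - A),
    exp_pos (t - 1 - t), mul_nonneg hb hX]

theorem eventually_mul_rpow_le_rpow_add (p d R : ℝ) {κ : ℝ} (hκ : κ < 1) :
    ∀ᶠ t in atTop, κ * (t + R) ^ p ≤ (t + d) ^ p := by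
  have hshift : Tendsto (fun t : ℝ => t + R) atTop atTop :=
    tendsto_atTop_add_const_right _ R tendsto_id
  have hratio : Tendsto (fun t => ((t + d) / (t + R)) ^ p) atTop (𝓝 1) := by
    have h : Tendsto (fun t => 1 + (d - R) / (t + R)) atTop (𝓝 1) := by
      simpa using tendsto_const_nhds.add (tendsto_const_nhds.div_atTop hshift)
    have h' := h.rpow_const (p := p) (Or.inl one_ne_zero)
    rw [one_rpow] at h'
    refine h'.congr' ?_
    filter_upwards [hshift.eventually_gt_atTop 0] with t ht
    congr 1
    field_simp
    ring
  filter_upwards [hratio.eventually (eventually_ge_nhds hκ), hshift.eventually_gt_atTop 0,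
    eventually_ge_atTop (-d)] with t hκt ht htd
  rwa [div_rpow (by linarith) ht.le, le_div_iff₀ (rpow_pos_of_pos ht p)] at hκt

theorem eventually_mul_rpow_le_of_mul_rpow_sub_one_sub_le {f : ℝ → ℝ} {β κ K p R t₀ : ℝ}
    (hβ : 0 < β) (hp : 0 < p) (hκ : κ < 1) (hf : ∀ t, t₀ ≤ t → β * (t - 1 + R) ^ p - K ≤ f t) :
    ∀ᶠ t in atTop, κ * β * (t + R) ^ p ≤ f t := by
  have hκ' : (κ + 1) / 2 < 1 := by linarith
  have hgrow : Tendsto (fun t : ℝ => (t + R) ^ p) atTop atTop :=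
    (tendsto_rpow_atTop hp).comp (tendsto_atTop_add_const_right _ R tendsto_id)
  filter_upwards [eventually_mul_rpow_le_rpow_add p (R - 1) R hκ',
    hgrow.eventually_ge_atTop (K / (β * ((κ + 1) / 2 - κ))), eventually_ge_atTop t₀]
    with t hshift hlarge ht
  rw [div_le_iff₀ (by nlinarith)] at hlarge
  rw [show t + (R - 1) = t - 1 + R by ring] at hshift
  nlinarith [hf t ht, mul_le_mul_of_nonneg_left hshift hβ.le]

theorem stmt_14_general
    (c R σ : ℝ) (hc : 0 < c) (hR : 0 < R) (hσ : -1 < σ)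
    (H : ℝ → ℝ)
    (hH : ContDiffOn ℝ 2 H (Ici 0))
    (hineq : ∀ t, 0 ≤ t → c * (t + R) ^ σ ≤ deriv (deriv H) t + deriv H t) :
    ∃ T, 0 < T ∧ ∀ t, T ≤ t →
      c / (8 * (σ + 1)) * (t + R) ^ (σ + 1) ≤ H t := by
  have hp : 0 < σ + 1 := by linarith
  have hnhds : ∀ x ∈ Ici (1 : ℝ), Ici (0 : ℝ) ∈ 𝓝 x :=
    fun x hx => Ici_mem_nhds (by linarith [hx.out])
  have hH' : ∀ x ∈ Ici (1 : ℝ), HasDerivAt H (deriv H x) x :=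
    fun x hx => hH.hasDerivAt_deriv two_ne_zero (hnhds x hx)
  have hmono := monotoneOn_sub_mul_rpow_of_le_deriv (P := fun t => deriv H t + H t) hσ
    (by linarith) (fun x hx => (hH.hasDerivAt_deriv_deriv le_rfl (hnhds x hx)).add (hH' x hx))
    fun x hx => hineq x (by linarith [hx.out])
  obtain ⟨K, hK⟩ := exists_half_mul_rpow_sub_le_of_le_deriv_add
    (a := 1) (p := σ + 1) (R := R) (A := deriv H 1 + H 1 - c / (σ + 1) * (1 + R) ^ (σ + 1))
    (div_pos hc hp).le hp.le (by linarith) hH'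
    fun x hx => by linarith [hmono self_mem_Ici hx hx]
  have hlower := eventually_mul_rpow_le_of_mul_rpow_sub_one_sub_le (κ := 1 / 4)
    (by positivity) hp (by norm_num) hK
  obtain ⟨T, hT⟩ := eventually_atTop.1 (hlower.and (eventually_gt_atTop 0))
  refine ⟨T, (hT T le_rfl).2, fun t ht => ?_⟩
  calc c / (8 * (σ + 1)) * (t + R) ^ (σ + 1)
      = 1 / 4 * (c / (σ + 1) / 2) * (t + R) ^ (σ + 1) := by rw [mul_comm 8, ← div_div]; ring
    _ ≤ H t := (hT t ht).1

/-- Polynomial lower bound for a solution of `H'' + H' ≥ c(t+R)^σ`. -/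
theorem stmt_14
    (c R σ : ℝ) (hc : 0 < c) (hR : 0 < R) (hσ : -1 < σ)
    (H : ℝ → ℝ)
    (hH : ContDiffOn ℝ 2 H (Ici 0))
    (hH0 : 0 ≤ H 0) (hH0' : 0 ≤ deriv H 0 + H 0)
    (hineq : ∀ t, 0 ≤ t → c * (t + R) ^ σ ≤ deriv (deriv H) t + deriv H t) :
    ∃ T, 0 < T ∧ ∀ t, T ≤ t →
      c / (8 * (σ + 1)) * (t + R) ^ (σ + 1) ≤ H t :=
  stmt_14_general c R σ hc hR hσ H hH hineq
end

section
/- Let K, k₃, β₁, R > 0, ν ≥ 0, a > 1, T₆ ≥ 0 and T' > T₆, and let 0 < δ ≤ (a−1)/β₁. Suppose G : [T₆, T'] → ℝ is continuously differentiable and satisfies, for all t ∈ [T₆, T']: G(t) ≥ k₃(t+R)^{β₁} and G'(t) ≥ K e^{-ν t}(t+R)^{-a} G(t)^{1 + (a−1)/β₁}. Then for all t ∈ [T₆, T']: G(T₆)^{-δ} − G(t)^{-δ} ≥ (K/β₁) k₃^{(a−1)/β₁ − δ} e^{-ν t} ((T₆+R)^{-δβ₁} − (t+R)^{-δβ₁});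 in particular G(T₆)^{-δ} > (K/β₁) k₃^{(a−1)/β₁ − δ} e^{-ν T'} ((T₆+R)^{-δβ₁} − (T'+R)^{-δβ₁}), so no such G exists on [T₆, T'] once this last strict inequality fails. -/
/-!
Along a solution, `(G^{-δ})' = -δ G^{-δ-1} G'`, and the differential inequality together with
the lower bound `G ≥ k₃ (s+R)^{β₁}`, raised to the nonnegative power `(a-1)/β₁ - δ`, gives
`(G^{-δ})'(s) ≤ -δ K k₃^{(a-1)/β₁ - δ} e^{-νs} (s+R)^{-δβ₁-1}`: in the critical case the powers
of `s + R` combine exactly into a multiple of the derivative of `(s+R)^{-δβ₁}`. Comparing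
derivatives on `[T₆, t]`, after replacing `e^{-νs}` by the smaller `e^{-νt}`, gives the bound;
at `t = T'` it is strict because `G(T')^{-δ} > 0`.
-/

open Real Set

theorem sub_le_sub_of_hasDerivAt_le {f g f' g' : ℝ → ℝ} {a b : ℝ} (hab : a ≤ b)
    (hf : ContinuousOn f (Icc a b)) (hg : ContinuousOn g (Icc a b))
    (hf' : ∀ x ∈ Ioo a b, HasDerivAt f (f' x) x) (hg' : ∀ x ∈ Ioo a b, HasDerivAt g (g' x) x)
    (hle : ∀ x ∈ Ioo a b, f' x ≤ g' x) :
    f b - f a ≤ g b - g a := by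
  have hmono : MonotoneOn (g - f) (Icc a b) := by
    refine monotoneOn_of_hasDerivWithinAt_nonneg (convex_Icc a b) (hg.sub hf) (f' := g' - f')
      (fun x hx ↦ ?_) fun x hx ↦ ?_
    · rw [interior_Icc] at hx
      exact ((hg' x hx).sub (hf' x hx)).hasDerivWithinAt
    · rw [interior_Icc] at hx
      exact sub_nonneg.2 (hle x hx)
  have := hmono (left_mem_Icc.2 hab) (right_mem_Icc.2 hab) hab
  simp only [Pi.sub_apply] at this
  linarith

theorem critical_rate_le {K k β a δ e y g d : ℝ} (hK : 0 ≤ K) (hk : 0 < k) (hβ : 0 < β)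
    (hδ : 0 ≤ δ) (hδ' : δ ≤ (a - 1) / β) (he : 0 ≤ e) (hy : 0 < y) (hlow : k * y ^ β ≤ g)
    (hd : K * e * y ^ (-a) * g ^ (1 + (a - 1) / β) ≤ d) :
    δ * K * k ^ ((a - 1) / β - δ) * e * y ^ (-(δ * β) - 1) ≤ δ * g ^ (-δ - 1) * d := by
  set c := (a - 1) / β - δ with hc
  have hg : 0 < g := (by positivity : 0 < k * y ^ β).trans_le hlow
  have hlow_pow : k ^ c * y ^ (β * c) ≤ g ^ c := by
    rw [rpow_mul hy.le, ← mul_rpow hk.le (by positivity)]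
    exact rpow_le_rpow (by positivity) hlow (sub_nonneg.2 hδ')
  have hy_pow : y ^ (-(δ * β) - 1) = y ^ (-a) * y ^ (β * c) := by
    rw [← rpow_add hy, hc]
    congr 1
    field_simp
    ring
  have hg_pow : g ^ (-δ - 1) * g ^ (1 + (a - 1) / β) = g ^ c := by
    rw [← rpow_add hg, hc]
    ring_nf
  calc δ * K * k ^ c * e * y ^ (-(δ * β) - 1) = δ * (K * e * y ^ (-a)) * (k ^ c * y ^ (β * c)) := by
        rw [hy_pow]; ring
    _ ≤ δ * (K * e * y ^ (-a)) * g ^ c := by gcongr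
    _ = δ * g ^ (-δ - 1) * (K * e * y ^ (-a) * g ^ (1 + (a - 1) / β)) := by
        rw [← hg_pow]; ring
    _ ≤ δ * g ^ (-δ - 1) * d := by gcongr

theorem critical_blowup_bound {K k β R ν a δ s t : ℝ} {G : ℝ → ℝ} (hK : 0 ≤ K) (hk : 0 < k)
    (hβ : 0 < β) (hν : 0 ≤ ν) (hδ : 0 ≤ δ) (hδ' : δ ≤ (a - 1) / β) (hsR : 0 < s + R)
    (hst : s ≤ t) (hGc : ContinuousOn G (Icc s t)) (hGd : DifferentiableOn ℝ G (Ioo s t))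
    (hlow : ∀ x ∈ Icc s t, k * (x + R) ^ β ≤ G x)
    (hineq : ∀ x ∈ Ioo s t,
      K * exp (-ν * x) * (x + R) ^ (-a) * G x ^ (1 + (a - 1) / β) ≤ deriv G x) :
    K / β * k ^ ((a - 1) / β - δ) * exp (-ν * t) * ((s + R) ^ (-(δ * β)) - (t + R) ^ (-(δ * β))) ≤
      G s ^ (-δ) - G t ^ (-δ) := by
  set C := K / β * k ^ ((a - 1) / β - δ) * exp (-ν * t)
  have hxR : ∀ x ∈ Icc s t, 0 < x + R := fun x hx ↦ hsR.trans_le (by linarith [hx.1])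
  have hG : ∀ x ∈ Icc s t, 0 < G x := fun x hx ↦
    (mul_pos hk (rpow_pos_of_pos (hxR x hx) β)).trans_le (hlow x hx)
  have hrate : ∀ x ∈ Ioo s t, -C * (1 * -(δ * β) * (x + R) ^ (-(δ * β) - 1)) ≤
      -(deriv G x * -δ * G x ^ (-δ - 1)) := by
    intro x hx
    have hxR' := hxR x (Ioo_subset_Icc_self hx)
    have hexp : exp (-ν * t) ≤ exp (-ν * x) := exp_le_exp.2 (by nlinarith [hx.2])
    calc -C * (1 * -(δ * β) * (x + R) ^ (-(δ * β) - 1))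
        = δ * K * k ^ ((a - 1) / β - δ) * exp (-ν * t) * (x + R) ^ (-(δ * β) - 1) := by
          simp only [C]; field_simp
      _ ≤ δ * K * k ^ ((a - 1) / β - δ) * exp (-ν * x) * (x + R) ^ (-(δ * β) - 1) := by
          gcongr
      _ ≤ δ * G x ^ (-δ - 1) * deriv G x :=
          critical_rate_le hK hk hβ hδ hδ' (exp_pos _).le hxR'
            (hlow x (Ioo_subset_Icc_self hx)) (hineq x hx)
      _ = -(deriv G x * -δ * G x ^ (-δ - 1)) := by ring
  have := sub_le_sub_of_hasDerivAt_le hst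
    (f := fun x ↦ -C * (x + R) ^ (-(δ * β))) (g := fun x ↦ -G x ^ (-δ))
    (continuousOn_const.mul (((continuous_id.add continuous_const).continuousOn).rpow_const
      fun x hx ↦ Or.inl (hxR x hx).ne'))
    (hGc.rpow_const (fun x hx ↦ Or.inl (hG x hx).ne')).neg
    (fun x hx ↦ (((hasDerivAt_id x).add_const R).rpow_const
      (Or.inl (hxR x (Ioo_subset_Icc_self hx)).ne')).const_mul (-C))
    (fun x hx ↦ ((hGd.differentiableAt (Ioo_mem_nhds hx.1 hx.2)).hasDerivAt.rpow_const
      (Or.inl (hG x (Ioo_subset_Icc_self hx)).ne')).neg)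
    hrate
  linarith

theorem stmt_19_general
    (K k₃ β₁ R ν a T₆ T' δ : ℝ)
    (hK : 0 < K) (hk₃ : 0 < k₃) (hβ₁ : 0 < β₁) (hR : 0 < R)
    (hν : 0 ≤ ν) (hT₆ : 0 ≤ T₆) (hT' : T₆ < T')
    (hδ : 0 < δ) (hδ' : δ ≤ (a - 1) / β₁)
    (G : ℝ → ℝ)
    (hG : ContDiffOn ℝ 1 G (Icc T₆ T'))
    (hlow : ∀ t ∈ Icc T₆ T', k₃ * (t + R) ^ β₁ ≤ G t)
    (hineq : ∀ t ∈ Icc T₆ T',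
      K * Real.exp (-ν * t) * (t + R) ^ (-a) * (G t) ^ (1 + (a - 1) / β₁) ≤ deriv G t) :
    (∀ t ∈ Icc T₆ T',
      K / β₁ * k₃ ^ ((a - 1) / β₁ - δ) * Real.exp (-ν * t) *
        ((T₆ + R) ^ (-(δ * β₁)) - (t + R) ^ (-(δ * β₁))) ≤
      (G T₆) ^ (-δ) - (G t) ^ (-δ)) ∧
    K / β₁ * k₃ ^ ((a - 1) / β₁ - δ) * Real.exp (-ν * T') *
        ((T₆ + R) ^ (-(δ * β₁)) - (T' + R) ^ (-(δ * β₁))) <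
      (G T₆) ^ (-δ) := by
  have hbound : ∀ t ∈ Icc T₆ T', K / β₁ * k₃ ^ ((a - 1) / β₁ - δ) * Real.exp (-ν * t) *
      ((T₆ + R) ^ (-(δ * β₁)) - (t + R) ^ (-(δ * β₁))) ≤ (G T₆) ^ (-δ) - (G t) ^ (-δ) :=
    fun t ht ↦ critical_blowup_bound hK.le hk₃ hβ₁ hν hδ.le hδ' (by linarith) ht.1
      (hG.continuousOn.mono (Icc_subset_Icc_right ht.2))
      ((hG.differentiableOn one_ne_zero).mono
        (Ioo_subset_Icc_self.trans (Icc_subset_Icc_right ht.2)))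
      (fun x hx ↦ hlow x ⟨hx.1, hx.2.trans ht.2⟩)
      (fun x hx ↦ hineq x ⟨hx.1.le, hx.2.le.trans ht.2⟩)
  have hT'mem : T' ∈ Icc T₆ T' := right_mem_Icc.2 hT'.le
  have hGT' : 0 < G T' ^ (-δ) :=
    rpow_pos_of_pos ((mul_pos hk₃ (rpow_pos_of_pos (by linarith) β₁)).trans_le (hlow T' hT'mem)) _
  exact ⟨hbound, by linarith [hbound T' hT'mem]⟩

/-- Critical-case blow-up bound: a `C¹` function `G` on `[T₆, T']` with
`G(t) ≥ k₃(t+R)^{β₁}` and `G'(t) ≥ K e^{-νt}(t+R)^{-a} G(t)^{1+(a-1)/β₁}` satisfies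
the stated lower bound for `G(T₆)^{-δ} - G(t)^{-δ}`, and in particular the strict
inequality at `t = T'`. -/
theorem stmt_19
    (K k₃ β₁ R ν a T₆ T' δ : ℝ)
    (hK : 0 < K) (hk₃ : 0 < k₃) (hβ₁ : 0 < β₁) (hR : 0 < R)
    (hν : 0 ≤ ν) (ha : 1 < a) (hT₆ : 0 ≤ T₆) (hT' : T₆ < T')
    (hδ : 0 < δ) (hδ' : δ ≤ (a - 1) / β₁)
    (G : ℝ → ℝ)
    (hG : ContDiffOn ℝ 1 G (Icc T₆ T'))
    (hlow : ∀ t ∈ Icc T₆ T', k₃ * (t + R) ^ β₁ ≤ G t)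
    (hineq : ∀ t ∈ Icc T₆ T',
      K * Real.exp (-ν * t) * (t + R) ^ (-a) * (G t) ^ (1 + (a - 1) / β₁) ≤ deriv G t) :
    (∀ t ∈ Icc T₆ T',
      K / β₁ * k₃ ^ ((a - 1) / β₁ - δ) * Real.exp (-ν * t) *
        ((T₆ + R) ^ (-(δ * β₁)) - (t + R) ^ (-(δ * β₁))) ≤
      (G T₆) ^ (-δ) - (G t) ^ (-δ)) ∧
    K / β₁ * k₃ ^ ((a - 1) / β₁ - δ) * Real.exp (-ν * T') *
        ((T₆ + R) ^ (-(δ * β₁)) - (T' + R) ^ (-(δ * β₁))) <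
      (G T₆) ^ (-δ) :=
  stmt_19_general K k₃ β₁ R ν a T₆ T' δ hK hk₃ hβ₁ hR hν hT₆ hT' hδ hδ' G hG hlow hineq
end
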